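/- arXiv:2506.17884 — 6 statements merged into one kernel-verified Lean document; each statement's English description precedes it below -/
import Mathlib

section
/- The optimal solution set S₁ of the penalty problem (P1), i.e. the set of global minimizers of Θ over ℝ^{N̄}, is nonempty and compact; moreover, for every γ ≥ 0 the level set {z : Θ(z) ≤ γ} is bounded. -/
open Filter Topology

noncomputable section

section General

variable {E F : Type*} [NormedAddCommGroup E] [NormedSpace ℝ E]
  [NormedAddCommGroup F] [NormedSpace ℝ F]

/-- `f` has directional derivative `y` at `x` along direction `d`. -/
def HasDirDeriv (f : E → F) (x d : E) (y : F) : Prop :=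
  Tendsto (fun τ : ℝ => τ⁻¹ • (f (x + τ • d) - f x)) (𝓝[>] 0) (𝓝 y)

/-- `f` has first- and second-order directional derivatives `y₁`, `y₂` at `x` along `d`. -/
def HasDirDeriv2 (f : E → F) (x d : E) (y₁ y₂ : F) : Prop :=
  HasDirDeriv f x d y₁ ∧
    Tendsto (fun τ : ℝ => (τ ^ 2 / 2)⁻¹ • (f (x + τ • d) - f x - τ • y₁)) (𝓝[>] 0) (𝓝 y₂)

open Classical in
def dirD (f : E → F) (x d : E) : F :=
  if h : ∃ y, HasDirDeriv f x d y then h.choose else 0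

open Classical in
def dirD2 (f : E → F) (x d : E) : F :=
  if h : ∃ y, Tendsto
      (fun τ : ℝ => (τ ^ 2 / 2)⁻¹ • (f (x + τ • d) - f x - τ • dirD f x d)) (𝓝[>] 0) (𝓝 y)
  then h.choose else 0

/-- The (Bouligand) tangent cone of `s` at `x`. -/
def tangentCone (s : Set E) (x : E) : Set E :=
  {d | ∃ (z : ℕ → E) (τ : ℕ → ℝ), (∀ k, z k ∈ s) ∧ Tendsto z atTop (𝓝 x) ∧
    (∀ k, 0 < τ k) ∧ Tendsto τ atTop (𝓝 0) ∧
    Tendsto (fun k => (τ k)⁻¹ • (z k - x)) atTop (𝓝 d)}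

/-- The radial cone of `s` at `x`. -/
def radialCone (s : Set E) (x : E) : Set E :=
  {d | ∃ τ : ℕ → ℝ, (∀ k, 0 < τ k) ∧ Tendsto τ atTop (𝓝 0) ∧ ∀ k, x + τ k • d ∈ s}

/-- `f` is twice semidifferentiable (in the sense of Rockafellar-Wets / Cui-Pang). -/
def TwiceSemidiff (f : E → ℝ) : Prop :=
  ∀ x d : E, ∃ y₁ y₂ : ℝ,
    Tendsto (fun p : ℝ × E => (f (x + p.1 • p.2) - f x) / p.1)
      ((𝓝[>] 0) ×ˢ 𝓝 d) (𝓝 y₁) ∧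
    Tendsto (fun p : ℝ × E => (f (x + p.1 • p.2) - f x - p.1 * dirD f x p.2) / (p.1 ^ 2 / 2))
      ((𝓝[>] 0) ×ˢ 𝓝 d) (𝓝 y₂)

end General
section Multi

/-- The parameter space `ℝⁿ`. -/
abbrev TSp (n : ℕ) : Type := EuclideanSpace ℝ (Fin n)

/-- The space of auxiliary variables `u = (u₁, …, u_L)`. -/
abbrev USp (L : ℕ) (N : Fin L → ℕ) : Type := EuclideanSpace ℝ (Σ ℓ : Fin L, Fin (N ℓ))

/-- The full variable space `z = (θ, u)` with Euclidean norm. -/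
abbrev ZSp (n L : ℕ) (N : Fin L → ℕ) : Type :=
  EuclideanSpace ℝ (Fin n ⊕ Σ ℓ : Fin L, Fin (N ℓ))

variable {n L : ℕ} {N : Fin L → ℕ}

/-- The `θ`-block of `z`. -/
def thOf (z : ZSp n L N) : TSp n := WithLp.toLp 2 (fun i => z (Sum.inl i))

/-- The `u`-block of `z`. -/
def uOf (z : ZSp n L N) : USp L N := WithLp.toLp 2 (fun j => z (Sum.inr j))

/-- The block `u_ℓ` of `z`. -/
def uBlk (z : ZSp n L N) (ℓ : Fin L) : EuclideanSpace ℝ (Fin (N ℓ)) :=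
  WithLp.toLp 2 (fun i => z (Sum.inr ⟨ℓ, i⟩))

/-- The truncation `(u₁, …, u_{ℓ-1}, 0, …, 0)` of the `u`-block of `z`. -/
def uLow (z : ZSp n L N) (ℓ : Fin L) : USp L N :=
  WithLp.toLp 2 (fun j => if j.1 < ℓ then z (Sum.inr j) else 0)

/-- `ψ ℓ` only depends on `θ` and the blocks `u_j` with `j < ℓ`; this encodes that
`ψ_{ℓ-1}` is a function of `(θ, u₁, …, u_{ℓ-1})`. -/
def DepBelow (ψ : (ℓ : Fin L) → ZSp n L N → EuclideanSpace ℝ (Fin (N ℓ))) : Prop :=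
  ∀ ℓ : Fin L, ∀ z z' : ZSp n L N, thOf z = thOf z' →
    (∀ j : Fin L, j < ℓ → uBlk z j = uBlk z' j) → ψ ℓ z = ψ ℓ z'

/-- The feasible set `F₀ = {z : u_ℓ = ψ_{ℓ-1}(θ, u₁, …, u_{ℓ-1})}`. -/
def Feas (ψ : (ℓ : Fin L) → ZSp n L N → EuclideanSpace ℝ (Fin (N ℓ))) : Set (ZSp n L N) :=
  {z | ∀ ℓ, uBlk z ℓ = ψ ℓ z}

/-- The objective `F(z) = g(u) + λ‖θ‖²` of problem (P0). -/
def Fobj (g : USp L N → ℝ) (lam : ℝ) (z : ZSp n L N) : ℝ :=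
  g (uOf z) + lam * ‖thOf z‖ ^ 2

/-- The objective `Θ(z) = F(z) + Σ_ℓ β_ℓ ‖u_ℓ − ψ_{ℓ-1}(θ, u₁, …, u_{ℓ-1})‖₁`
of the penalty problem (P1). -/
def Th (g : USp L N → ℝ) (lam : ℝ)
    (ψ : (ℓ : Fin L) → ZSp n L N → EuclideanSpace ℝ (Fin (N ℓ))) (β : Fin L → ℝ)
    (z : ZSp n L N) : ℝ :=
  Fobj g lam z + ∑ ℓ, β ℓ * ∑ i, |uBlk z ℓ i - ψ ℓ z i|

/-- The `ε`-enlargement `{z : Θ(z) ≤ γ} + ε·B(0,1)` of a level set of `Θ`. -/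
def LevE (g : USp L N → ℝ) (lam : ℝ)
    (ψ : (ℓ : Fin L) → ZSp n L N → EuclideanSpace ℝ (Fin (N ℓ))) (β : Fin L → ℝ)
    (γ ε : ℝ) : Set (ZSp n L N) :=
  {w | ∃ v : ZSp n L N, Th g lam ψ β v ≤ γ ∧ ‖w - v‖ ≤ ε}

end Multi

section AuxProof

variable {n L : ℕ} {N : Fin L → ℕ}

lemma continuous_thOf : Continuous (thOf (n := n) (L := L) (N := N)) :=
  (PiLp.continuous_toLp 2 _).comp (continuous_pi fun _ => (continuous_apply _).comp (PiLp.continuous_ofLp 2 _))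

lemma continuous_uOf : Continuous (uOf (n := n) (L := L) (N := N)) :=
  (PiLp.continuous_toLp 2 _).comp (continuous_pi fun _ => (continuous_apply _).comp (PiLp.continuous_ofLp 2 _))

lemma continuous_Th' {g : USp L N → ℝ} (hgc : Continuous g) (lam : ℝ)
    {ψ : (ℓ : Fin L) → ZSp n L N → EuclideanSpace ℝ (Fin (N ℓ))}
    (hψc : ∀ ℓ, Continuous (ψ ℓ)) (β : Fin L → ℝ) :
    Continuous (Th g lam ψ β) := by
  unfold Th Fobj
  refine Continuous.add (Continuous.add (hgc.comp continuous_uOf)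
    (continuous_const.mul ((continuous_norm.comp continuous_thOf).pow 2))) ?_
  refine continuous_finset_sum _ fun ℓ _ => Continuous.mul continuous_const ?_
  refine continuous_finset_sum _ fun i _ => Continuous.abs ?_
  exact ((continuous_apply _).comp (PiLp.continuous_ofLp 2 _)).sub
    ((continuous_apply i).comp ((PiLp.continuous_ofLp 2 _).comp (hψc ℓ)))

lemma pen_nonneg {β : Fin L → ℝ} (hβ : ∀ ℓ, 0 < β ℓ)
    (ψ : (ℓ : Fin L) → ZSp n L N → EuclideanSpace ℝ (Fin (N ℓ))) (z : ZSp n L N) :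
    0 ≤ ∑ ℓ, β ℓ * ∑ i, |uBlk z ℓ i - ψ ℓ z i| :=
  Finset.sum_nonneg fun ℓ _ => mul_nonneg (hβ ℓ).le
    (Finset.sum_nonneg fun _ _ => abs_nonneg _)

lemma norm_le_sum_abs {m : ℕ} (v : EuclideanSpace ℝ (Fin m)) : ‖v‖ ≤ ∑ i, |v i| := by
  rw [EuclideanSpace.norm_eq]
  calc Real.sqrt (∑ i, ‖v i‖ ^ 2) ≤ Real.sqrt ((∑ i, ‖v i‖) ^ 2) :=
        Real.sqrt_le_sqrt (Finset.sum_sq_le_sq_sum_of_nonneg fun _ _ => norm_nonneg _)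
    _ = ∑ i, ‖v i‖ := Real.sqrt_sq (Finset.sum_nonneg fun _ _ => norm_nonneg _)
    _ = ∑ i, |v i| := by simp [Real.norm_eq_abs]

lemma norm_sq_split (z : ZSp n L N) :
    ‖z‖ ^ 2 = ‖thOf z‖ ^ 2 + ∑ ℓ, ‖uBlk z ℓ‖ ^ 2 := by
  have h : ∀ {m : ℕ} (v : EuclideanSpace ℝ (Fin m)), ‖v‖ ^ 2 = ∑ i, ‖v i‖ ^ 2 := by
    intro m v
    rw [EuclideanSpace.norm_eq, Real.sq_sqrt (Finset.sum_nonneg fun _ _ => sq_nonneg _)]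
  have hz : ‖z‖ ^ 2 = ∑ j, ‖z j‖ ^ 2 := by
    rw [EuclideanSpace.norm_eq, Real.sq_sqrt (Finset.sum_nonneg fun _ _ => sq_nonneg _)]
  rw [hz, Fintype.sum_sum_type, h (thOf z)]
  congr 1
  rw [← Finset.univ_sigma_univ, Finset.sum_sigma]
  exact Finset.sum_congr rfl fun ℓ _ => by rw [h (uBlk z ℓ)]; rfl

lemma norm_z_le {A C : ℝ} (z : ZSp n L N) (hθ : ‖thOf z‖ ^ 2 ≤ A)
    (hu : ∀ j, ‖uBlk z j‖ ≤ C) (hC : 0 ≤ C) :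
    ‖z‖ ≤ Real.sqrt (A + L * C ^ 2) := by
  have hsq : ‖z‖ ^ 2 ≤ A + L * C ^ 2 := by
    rw [norm_sq_split]
    have : ∑ ℓ, ‖uBlk z ℓ‖ ^ 2 ≤ ∑ _ℓ : Fin L, C ^ 2 :=
      Finset.sum_le_sum fun ℓ _ => pow_le_pow_left₀ (norm_nonneg _) (hu ℓ) 2
    have h2 : ∑ _ℓ : Fin L, C ^ 2 = L * C ^ 2 := by
      simp [Finset.sum_const, mul_comm]
    linarith
  calc ‖z‖ = Real.sqrt (‖z‖ ^ 2) := (Real.sqrt_sq (norm_nonneg _)).symm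
    _ ≤ _ := Real.sqrt_le_sqrt hsq

/-- Truncation of `z` keeping `θ` and blocks below `ℓ`. -/
def truncZ (z : ZSp n L N) (ℓ : Fin L) : ZSp n L N := WithLp.toLp 2 fun j =>
  match j with
  | Sum.inl i => z (Sum.inl i)
  | Sum.inr j => if j.1 < ℓ then z (Sum.inr j) else 0

lemma thOf_truncZ (z : ZSp n L N) (ℓ : Fin L) : thOf (truncZ z ℓ) = thOf z := rfl

lemma uBlk_truncZ_lt (z : ZSp n L N) {ℓ j : Fin L} (h : j < ℓ) :
    uBlk (truncZ z ℓ) j = uBlk z j := by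
  ext i; simp [uBlk, truncZ, h]

lemma uBlk_truncZ_ge (z : ZSp n L N) {ℓ j : Fin L} (h : ¬ j < ℓ) :
    uBlk (truncZ z ℓ) j = 0 := by
  ext i; simp [uBlk, truncZ, h]

lemma psi_truncZ {ψ : (ℓ : Fin L) → ZSp n L N → EuclideanSpace ℝ (Fin (N ℓ))}
    (hdep : DepBelow ψ) (z : ZSp n L N) (ℓ : Fin L) :
    ψ ℓ (truncZ z ℓ) = ψ ℓ z :=
  hdep ℓ _ _ rfl fun j hj => uBlk_truncZ_lt z hj

lemma lev_bounded {lam : ℝ} (hlam : 0 < lam) {β : Fin L → ℝ} (hβ : ∀ ℓ, 0 < β ℓ)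
    {g : USp L N → ℝ} (hg0 : ∀ u, 0 ≤ g u)
    {ψ : (ℓ : Fin L) → ZSp n L N → EuclideanSpace ℝ (Fin (N ℓ))}
    (hψc : ∀ ℓ, Continuous (ψ ℓ)) (hdep : DepBelow ψ) (γ : ℝ) :
    Bornology.IsBounded {z : ZSp n L N | Th g lam ψ β z ≤ γ} := by
  set S := {z : ZSp n L N | Th g lam ψ β z ≤ γ} with hS
  -- θ bound
  have hθ : ∀ z ∈ S, ‖thOf z‖ ^ 2 ≤ γ / lam := by
    intro z hz
    have h1 : lam * ‖thOf z‖ ^ 2 ≤ Th g lam ψ β z := by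
      have := hg0 (uOf z)
      have := pen_nonneg hβ ψ z
      simp only [Th, Fobj]; linarith
    have h2 : lam * ‖thOf z‖ ^ 2 ≤ γ := h1.trans hz
    rw [le_div_iff₀' hlam]; exact h2
  -- penalty term bound, per layer
  have hpenℓ : ∀ z ∈ S, ∀ ℓ, ∑ i, |uBlk z ℓ i - ψ ℓ z i| ≤ γ / β ℓ := by
    intro z hz ℓ
    have h1 : β ℓ * ∑ i, |uBlk z ℓ i - ψ ℓ z i| ≤
        ∑ ℓ', β ℓ' * ∑ i, |uBlk z ℓ' i - ψ ℓ' z i| :=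
      Finset.single_le_sum (f := fun ℓ' => β ℓ' * ∑ i, |uBlk z ℓ' i - ψ ℓ' z i|)
        (fun ℓ' _ => mul_nonneg (hβ ℓ').le (Finset.sum_nonneg fun _ _ => abs_nonneg _))
        (Finset.mem_univ ℓ)
    have h2 : β ℓ * ∑ i, |uBlk z ℓ i - ψ ℓ z i| ≤ γ := by
      have hF : 0 ≤ Fobj g lam z := by
        have := hg0 (uOf z)
        have : (0:ℝ) ≤ lam * ‖thOf z‖ ^ 2 := mul_nonneg hlam.le (sq_nonneg _)
        simp only [Fobj]; positivity
      have := hz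
      simp only [hS, Set.mem_setOf_eq, Th] at this
      linarith
    rw [le_div_iff₀' (hβ ℓ)]; exact h2
  -- inductive block bounds
  have key : ∀ m : ℕ, ∃ C : ℝ, 0 ≤ C ∧ ∀ z ∈ S, ∀ j : Fin L, j.1 < m → ‖uBlk z j‖ ≤ C := by
    intro m
    induction m with
    | zero => exact ⟨0, le_refl 0, fun z _ j hj => absurd hj (Nat.not_lt_zero _)⟩
    | succ m ih =>
      obtain ⟨C, hC0, hC⟩ := ih
      by_cases hm : m < L
      · set ℓ : Fin L := ⟨m, hm⟩ with hℓ
        set R := Real.sqrt (γ / lam + L * C ^ 2) with hR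
        have htr : ∀ z ∈ S, truncZ z ℓ ∈ Metric.closedBall (0 : ZSp n L N) R := by
          intro z hz
          rw [Metric.mem_closedBall, dist_zero_right]
          refine norm_z_le _ ?_ ?_ hC0
          · rw [thOf_truncZ]; exact hθ z hz
          · intro j
            by_cases hj : j < ℓ
            · rw [uBlk_truncZ_lt z hj]; exact hC z hz j hj
            · rw [uBlk_truncZ_ge z hj]; simpa using hC0
        obtain ⟨M, hM⟩ : ∃ M, ∀ w ∈ Metric.closedBall (0 : ZSp n L N) R, ‖ψ ℓ w‖ ≤ M :=
          (isCompact_closedBall _ _).exists_bound_of_continuousOn (hψc ℓ).continuousOn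
        have hblk : ∀ z ∈ S, ‖uBlk z ℓ‖ ≤ γ / β ℓ + M := by
          intro z hz
          have h1 : ‖uBlk z ℓ - ψ ℓ z‖ ≤ γ / β ℓ := by
            refine le_trans ?_ (hpenℓ z hz ℓ)
            have := norm_le_sum_abs (uBlk z ℓ - ψ ℓ z)
            simpa using this
          have h2 : ‖ψ ℓ z‖ ≤ M := by
            rw [← psi_truncZ hdep z ℓ]
            exact hM _ (htr z hz)
          calc ‖uBlk z ℓ‖ = ‖(uBlk z ℓ - ψ ℓ z) + ψ ℓ z‖ := by rw [sub_add_cancel]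
            _ ≤ ‖uBlk z ℓ - ψ ℓ z‖ + ‖ψ ℓ z‖ := norm_add_le _ _
            _ ≤ γ / β ℓ + M := add_le_add h1 h2
        refine ⟨max C (γ / β ℓ + M), le_max_of_le_left hC0, fun z hz j hj => ?_⟩
        rcases Nat.lt_succ_iff_lt_or_eq.mp hj with hj' | hj'
        · exact (hC z hz j hj').trans (le_max_left _ _)
        · have : j = ℓ := Fin.ext hj'
          rw [this]
          exact (hblk z hz).trans (le_max_right _ _)
      · refine ⟨C, hC0, fun z hz j hj => hC z hz j ?_⟩
        exact lt_of_lt_of_le j.2 (Nat.le_of_not_lt hm)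
  obtain ⟨C, hC0, hC⟩ := key L
  rw [Metric.isBounded_iff_subset_closedBall 0]
  refine ⟨Real.sqrt (γ / lam + L * C ^ 2), fun z hz => ?_⟩
  rw [Metric.mem_closedBall, dist_zero_right]
  exact norm_z_le z (hθ z hz) (fun j => hC z hz j j.2) hC0

end AuxProof
/-- Lemma 2.2: the optimal solution set `S₁` of the penalty problem (P1) is nonempty and
compact, and every level set of `Θ` is bounded. -/
theorem stmt1
    {n L : ℕ} (hn : 0 < n) (hL : 0 < L) {N : Fin L → ℕ} (hN : ∀ ℓ, 0 < N ℓ)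
    (lam : ℝ) (hlam : 0 < lam) (β : Fin L → ℝ) (hβ : ∀ ℓ, 0 < β ℓ)
    (g : USp L N → ℝ) (hg0 : ∀ u, 0 ≤ g u) (hgc : Continuous g)
    (ψ : (ℓ : Fin L) → ZSp n L N → EuclideanSpace ℝ (Fin (N ℓ)))
    (hψc : ∀ ℓ, Continuous (ψ ℓ)) (hdep : DepBelow ψ) :
    ({z : ZSp n L N | ∀ z' : ZSp n L N, Th g lam ψ β z ≤ Th g lam ψ β z'}.Nonempty ∧
      IsCompact {z : ZSp n L N | ∀ z' : ZSp n L N, Th g lam ψ β z ≤ Th g lam ψ β z'}) ∧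
    ∀ γ : ℝ, 0 ≤ γ → Bornology.IsBounded {z : ZSp n L N | Th g lam ψ β z ≤ γ} := by
  have hT := continuous_Th' hgc lam hψc β
  have hbdd := fun γ => lev_bounded (n := n) hlam hβ hg0 hψc hdep γ
  have hS1closed : IsClosed {z : ZSp n L N | ∀ z', Th g lam ψ β z ≤ Th g lam ψ β z'} := by
    have heq : {z : ZSp n L N | ∀ z', Th g lam ψ β z ≤ Th g lam ψ β z'} =
        ⋂ z' : ZSp n L N, {z | Th g lam ψ β z ≤ Th g lam ψ β z'} := by
      ext z; simp [Set.mem_iInter]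
    rw [heq]
    exact isClosed_iInter fun z' => isClosed_le hT continuous_const
  set K := {z : ZSp n L N | Th g lam ψ β z ≤ Th g lam ψ β 0} with hK
  have hKne : (0 : ZSp n L N) ∈ K := by simp only [hK, Set.mem_setOf_eq, le_refl]
  have hKcpt : IsCompact K :=
    Metric.isCompact_of_isClosed_isBounded (isClosed_le hT continuous_const) (hbdd _)
  obtain ⟨z₀, hz₀K, hz₀min⟩ := hKcpt.exists_isMinOn ⟨0, hKne⟩ hT.continuousOn
  have hglobal : ∀ z', Th g lam ψ β z₀ ≤ Th g lam ψ β z' := by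
    intro z'
    by_cases h : Th g lam ψ β z' ≤ Th g lam ψ β 0
    · exact isMinOn_iff.mp hz₀min z' h
    · exact (isMinOn_iff.mp hz₀min 0 hKne).trans (le_of_not_ge h)
  refine ⟨⟨⟨z₀, hglobal⟩, ?_⟩, fun γ _ => hbdd γ⟩
  refine Metric.isCompact_of_isClosed_isBounded hS1closed ?_
  exact (hbdd (Th g lam ψ β 0)).subset fun z hz => hz 0
end
end

section
/- Let f : ℝ^m → ℝ and F ⊆ ℝ^m with argmin_{x∈F} f(x) nonempty. If x̄ ∈ F is a local minimizer of f over F, f is Lipschitz continuous on some neighborhood of x̄, and f is twice directionally differentiable at x̄, then f^{(2)}(x̄;d) ≥ 0 for every d in the radial cone P_F(x̄) satisfying f′(x̄;d) = 0. -/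
open Filter Topology

noncomputable section

/-- Lemma 3.1 (second order): at a local minimizer `x̄` of `f` over `F`, the second-order
directional derivative is nonnegative along every radial direction with vanishing first-order
directional derivative. -/
theorem stmt4
    {m : ℕ} (f : EuclideanSpace ℝ (Fin m) → ℝ) (S : Set (EuclideanSpace ℝ (Fin m)))
    (hargmin : ∃ x₀ ∈ S, ∀ x ∈ S, f x₀ ≤ f x)
    (xbar : EuclideanSpace ℝ (Fin m)) (hxS : xbar ∈ S)
    (hloc : ∃ U ∈ 𝓝 xbar, ∀ x ∈ S ∩ U, f xbar ≤ f x)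
    (hLip : ∃ U ∈ 𝓝 xbar, ∃ K : ℝ, ∀ y ∈ U, ∀ w ∈ U, |f y - f w| ≤ K * ‖y - w‖)
    (f1 f2 : EuclideanSpace ℝ (Fin m) → ℝ)
    (hdd2 : ∀ d, HasDirDeriv2 f xbar d (f1 d) (f2 d)) :
    ∀ d ∈ radialCone S xbar, f1 d = 0 → 0 ≤ f2 d := by
  rintro d ⟨τ, hτpos, hτ0, hτS⟩ hf1
  obtain ⟨U, hU, hmin⟩ := hloc
  obtain ⟨_, h2⟩ := hdd2 d
  have hτ : Tendsto τ atTop (𝓝[>] (0:ℝ)) := by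
    rw [tendsto_nhdsWithin_iff]
    exact ⟨hτ0, Filter.Eventually.of_forall hτpos⟩
  have hseq := h2.comp hτ
  refine ge_of_tendsto hseq ?_
  have hmem : ∀ᶠ k in atTop, xbar + τ k • d ∈ U := by
    have htend : Tendsto (fun k => xbar + τ k • d) atTop (𝓝 xbar) := by
      have h := hτ0.smul_const d
      simpa using tendsto_const_nhds.add h
    exact htend.eventually_mem hU
  filter_upwards [hmem] with k hk
  have h1 : f xbar ≤ f (xbar + τ k • d) := hmin _ ⟨hτS k, hk⟩
  have h2' : (0:ℝ) ≤ f (xbar + τ k • d) - f xbar - τ k • f1 d := by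
    rw [hf1]; simp; linarith
  have htk := hτpos k
  have hpos : (0:ℝ) < ((τ k) ^ 2 / 2)⁻¹ := by positivity
  simpa [Function.comp, smul_eq_mul] using mul_nonneg hpos.le h2'
end
end

section
/- Under Assumption A1, F and Θ are directionally differentiable at every z ∈ ℝ^{N̄}, with F′(z;d) = g′(u;d_u) + 2λθᵀd_θ and Θ′(z;d) = F′(z;d) + Σ_{ℓ=1}^{L} β_ℓ [ Σ_{i∈I₊^ℓ(z)} (d_{u_ℓ} − ψ′_{ℓ-1}(θ,u₁,…,u_{ℓ-1}; d_θ,d_{u₁},…,d_{u_{ℓ-1}}))_i − Σ_{i∈I₋^ℓ(z)} (d_{u_ℓ} − ψ′_{ℓ-1}(θ,u₁,…,u_{ℓ-1}; d_θ,d_{u₁},…,d_{u_{ℓ-1}}))_i + Σ_{i∈I₀^ℓ(z)} |(d_{u_ℓ} − ψ′_{ℓ-1}(θ,u₁,…,u_{ℓ-1}; d_θ,d_{u₁},…,d_{u_{ℓ-1}}))_i| ], where I₊^ℓ(z) := {i : (u_ℓ − ψ_{ℓ-1}(θ,u₁,…,u_{ℓ-1}))_i > 0}, I₋^ℓ(z)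 := {i : (u_ℓ − ψ_{ℓ-1}(θ,u₁,…,u_{ℓ-1}))_i < 0}, and I₀^ℓ(z) is the complement of their union in {1,…,N_ℓ}. -/
open Filter Topology

noncomputable section

lemma myTendsto_of_dirq {a : ℝ → ℝ} {c b : ℝ}
    (h : Tendsto (fun τ => τ⁻¹ * (a τ - c)) (𝓝[>] (0:ℝ)) (𝓝 b)) :
    Tendsto a (𝓝[>] (0:ℝ)) (𝓝 c) := by
  have hid : Tendsto (fun τ : ℝ => τ) (𝓝[>] (0:ℝ)) (𝓝 0) :=
    tendsto_id.mono_left nhdsWithin_le_nhds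
  have h2 := (hid.mul h).add (tendsto_const_nhds (x := c))
  rw [zero_mul, zero_add] at h2
  refine h2.congr' ?_
  filter_upwards [self_mem_nhdsWithin] with τ hτ
  have hτ0 : (τ:ℝ) ≠ 0 := ne_of_gt hτ
  field_simp
  ring

lemma myAbs_dir {a : ℝ → ℝ} {c b : ℝ}
    (h : Tendsto (fun τ => τ⁻¹ * (a τ - c)) (𝓝[>] (0:ℝ)) (𝓝 b)) :
    Tendsto (fun τ => τ⁻¹ * (|a τ| - |c|)) (𝓝[>] (0:ℝ))
      (𝓝 (if 0 < c then b else if c < 0 then -b else |b|)) := by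
  have ha := myTendsto_of_dirq h
  rcases lt_trichotomy c 0 with hc | hc | hc
  · rw [if_neg (by linarith), if_pos hc]
    have hev : ∀ᶠ τ in 𝓝[>] (0:ℝ), a τ ∈ Set.Iio 0 := ha (Iio_mem_nhds hc)
    refine h.neg.congr' ?_
    filter_upwards [hev] with τ hτ
    rw [abs_of_neg hτ, abs_of_neg hc]
    ring
  · subst hc
    rw [if_neg (lt_irrefl 0), if_neg (lt_irrefl 0)]
    refine h.abs.congr' ?_
    filter_upwards [self_mem_nhdsWithin] with τ hτ
    simp [abs_mul, abs_of_pos (inv_pos.mpr (show (0:ℝ) < τ from hτ)), (show (0:ℝ) < τ from hτ).le]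
  · rw [if_pos hc]
    have hev : ∀ᶠ τ in 𝓝[>] (0:ℝ), a τ ∈ Set.Ioi 0 := ha (Ioi_mem_nhds hc)
    refine h.congr' ?_
    filter_upwards [hev] with τ hτ
    rw [abs_of_pos hτ, abs_of_pos hc]

lemma myV_split {ι : Type*} [Fintype ι] (c d : ι → ℝ) :
    (∑ i, if 0 < c i then d i else if c i < 0 then -d i else |d i|) =
      (∑ i ∈ Finset.univ.filter (fun i => 0 < c i), d i) -
        (∑ i ∈ Finset.univ.filter (fun i => c i < 0), d i) +
        ∑ i ∈ Finset.univ.filter (fun i => c i = 0), |d i| := by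
  rw [Finset.sum_filter, Finset.sum_filter, Finset.sum_filter, ← Finset.sum_sub_distrib,
    ← Finset.sum_add_distrib]
  refine Finset.sum_congr rfl fun i _ => ?_
  rcases lt_trichotomy (c i) 0 with h | h | h
  · simp [h, asymm h, h.ne]
  · simp [h]
  · simp [h, asymm h, h.ne']

lemma mySum_mul_rearr {ι : Type*} (s : Finset ι) (t : ℝ) (β x y : ι → ℝ) :
    ∑ ℓ ∈ s, β ℓ * (t * (x ℓ - y ℓ)) = t * ((∑ ℓ ∈ s, β ℓ * x ℓ) - ∑ ℓ ∈ s, β ℓ * y ℓ) := by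
  rw [← Finset.sum_sub_distrib, Finset.mul_sum]
  exact Finset.sum_congr rfl fun ℓ _ => by ring

/-- Proposition 3.1 (for F and Θ): under Assumption A1, `F` and `Θ` are directionally
differentiable, with the stated formulas for their directional derivatives. -/
theorem stmt6
    {n L : ℕ} (hn : 0 < n) (hL : 0 < L) {N : Fin L → ℕ} (hN : ∀ ℓ, 0 < N ℓ)
    (lam : ℝ) (hlam : 0 < lam) (β : Fin L → ℝ) (hβ : ∀ ℓ, 0 < β ℓ)
    (g : USp L N → ℝ) (hg0 : ∀ u, 0 ≤ g u)
    (ψ : (ℓ : Fin L) → ZSp n L N → EuclideanSpace ℝ (Fin (N ℓ)))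
    (hdep : DepBelow ψ)
    -- Assumption A1
    (hgLip : LocallyLipschitz g) (hψLip : ∀ ℓ, LocallyLipschitz (ψ ℓ))
    (gd : USp L N → USp L N → ℝ) (hgd : ∀ u du, HasDirDeriv g u du (gd u du))
    (ψd : (ℓ : Fin L) → ZSp n L N → ZSp n L N → EuclideanSpace ℝ (Fin (N ℓ)))
    (hψd : ∀ ℓ z d, HasDirDeriv (ψ ℓ) z d (ψd ℓ z d)) :
    ∀ z d : ZSp n L N,
      HasDirDeriv (Fobj g lam) z d
        (gd (uOf z) (uOf d) + 2 * lam * (inner ℝ (thOf z) (thOf d) : ℝ)) ∧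
      HasDirDeriv (Th g lam ψ β) z d
        (gd (uOf z) (uOf d) + 2 * lam * (inner ℝ (thOf z) (thOf d) : ℝ) +
          ∑ ℓ, β ℓ *
            ((∑ i ∈ Finset.univ.filter (fun i => 0 < uBlk z ℓ i - ψ ℓ z i),
                (uBlk d ℓ i - ψd ℓ z d i)) -
              (∑ i ∈ Finset.univ.filter (fun i => uBlk z ℓ i - ψ ℓ z i < 0),
                (uBlk d ℓ i - ψd ℓ z d i)) +
              ∑ i ∈ Finset.univ.filter (fun i => uBlk z ℓ i - ψ ℓ z i = 0),
                |uBlk d ℓ i - ψd ℓ z d i|)) := by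
  intro z d
  have huBlki : ∀ (τ : ℝ) (ℓ : Fin L) (i : Fin (N ℓ)),
      uBlk (z + τ • d) ℓ i = uBlk z ℓ i + τ * uBlk d ℓ i := fun _ _ _ => by simp [uBlk]
  have huOf : ∀ τ : ℝ, uOf (z + τ • d) = uOf z + τ • uOf d := fun _ => rfl
  have hthOf : ∀ τ : ℝ, thOf (z + τ • d) = thOf z + τ • thOf d := fun _ => rfl
  have hid : Tendsto (fun τ : ℝ => τ) (𝓝[>] (0:ℝ)) (𝓝 0) :=
    tendsto_id.mono_left nhdsWithin_le_nhds
  -- the quadratic part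
  have h2 : Tendsto (fun τ : ℝ => τ⁻¹ * (lam * ‖thOf z + τ • thOf d‖ ^ 2
        - lam * ‖thOf z‖ ^ 2)) (𝓝[>] (0:ℝ))
      (𝓝 (2 * lam * (inner ℝ (thOf z) (thOf d) : ℝ))) := by
    have h3 : Tendsto (fun τ : ℝ => 2 * lam * (inner ℝ (thOf z) (thOf d) : ℝ)
          + τ * (lam * ‖thOf d‖ ^ 2)) (𝓝[>] (0:ℝ))
        (𝓝 (2 * lam * (inner ℝ (thOf z) (thOf d) : ℝ) + 0 * (lam * ‖thOf d‖ ^ 2))) :=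
      tendsto_const_nhds.add (hid.mul tendsto_const_nhds)
    rw [zero_mul, add_zero] at h3
    refine h3.congr' ?_
    filter_upwards [self_mem_nhdsWithin] with τ hτ
    have hτ0 : (τ:ℝ) ≠ 0 := ne_of_gt hτ
    rw [norm_add_sq_real, real_inner_smul_right, norm_smul]
    simp only [Real.norm_eq_abs, abs_of_pos (show (0:ℝ) < τ from hτ), mul_pow]
    field_simp
    ring
  -- the g part
  have h1 : Tendsto (fun τ : ℝ => τ⁻¹ * (g (uOf (z + τ • d)) - g (uOf z))) (𝓝[>] (0:ℝ))
      (𝓝 (gd (uOf z) (uOf d))) := by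
    have := hgd (uOf z) (uOf d)
    unfold HasDirDeriv at this
    refine this.congr fun τ => ?_
    rw [smul_eq_mul, huOf]
  have hF : Tendsto (fun τ : ℝ => τ⁻¹ * (Fobj g lam (z + τ • d) - Fobj g lam z))
      (𝓝[>] (0:ℝ)) (𝓝 (gd (uOf z) (uOf d) + 2 * lam * (inner ℝ (thOf z) (thOf d) : ℝ))) := by
    refine (h1.add h2).congr fun τ => ?_
    simp only [Fobj, hthOf]
    ring
  -- the penalty part, blockwise
  have hpen : ∀ ℓ : Fin L, Tendsto
      (fun τ : ℝ => τ⁻¹ * ((∑ i, |uBlk (z + τ • d) ℓ i - ψ ℓ (z + τ • d) i|)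
        - ∑ i, |uBlk z ℓ i - ψ ℓ z i|)) (𝓝[>] (0:ℝ))
      (𝓝 ((∑ i ∈ Finset.univ.filter (fun i => 0 < uBlk z ℓ i - ψ ℓ z i),
              (uBlk d ℓ i - ψd ℓ z d i)) -
            (∑ i ∈ Finset.univ.filter (fun i => uBlk z ℓ i - ψ ℓ z i < 0),
              (uBlk d ℓ i - ψd ℓ z d i)) +
            ∑ i ∈ Finset.univ.filter (fun i => uBlk z ℓ i - ψ ℓ z i = 0),
              |uBlk d ℓ i - ψd ℓ z d i|)) := by
    intro ℓ
    have hcomp : ∀ i : Fin (N ℓ), Tendsto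
        (fun τ : ℝ => τ⁻¹ * ((uBlk (z + τ • d) ℓ i - ψ ℓ (z + τ • d) i)
          - (uBlk z ℓ i - ψ ℓ z i))) (𝓝[>] (0:ℝ))
        (𝓝 (uBlk d ℓ i - ψd ℓ z d i)) := by
      intro i
      have hψi : Tendsto (fun τ : ℝ => τ⁻¹ * (ψ ℓ (z + τ • d) i - ψ ℓ z i)) (𝓝[>] (0:ℝ))
          (𝓝 (ψd ℓ z d i)) := by
        have hproj := ((EuclideanSpace.proj (𝕜 := ℝ) i).continuous.tendsto
          (ψd ℓ z d)).comp (hψd ℓ z d)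
        simpa [Function.comp_def, smul_eq_mul] using hproj
      have hc := (tendsto_const_nhds (x := uBlk d ℓ i)
        (f := 𝓝[>] (0:ℝ))).sub hψi
      refine hc.congr' ?_
      filter_upwards [self_mem_nhdsWithin] with τ hτ
      have hτ0 : (τ:ℝ) ≠ 0 := ne_of_gt hτ
      rw [huBlki]
      field_simp
      ring
    have hsum := tendsto_finset_sum (Finset.univ (α := Fin (N ℓ)))
      (fun i _ => myAbs_dir (hcomp i))
    rw [myV_split (fun i => uBlk z ℓ i - ψ ℓ z i) (fun i => uBlk d ℓ i - ψd ℓ z d i)] at hsum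
    refine hsum.congr fun τ => ?_
    rw [← Finset.mul_sum, Finset.sum_sub_distrib]
  have hβsum := tendsto_finset_sum (Finset.univ (α := Fin L))
    (fun ℓ _ => (hpen ℓ).const_mul (β ℓ))
  have hTh := hF.add hβsum
  constructor
  · unfold HasDirDeriv
    refine hF.congr fun τ => ?_
    rw [smul_eq_mul]
  · unfold HasDirDeriv
    refine hTh.congr fun τ => ?_
    rw [smul_eq_mul]
    simp only [Th]
    rw [mySum_mul_rearr]
    ring
end
end

section
/- Under Assumptions A1 and A2, F and Θ are twice directionally differentiable at every z ∈ ℝ^{N̄}, with F^{(2)}(z;d) = g^{(2)}(u;d_u) + 2λ‖d_θ‖² and Θ^{(2)}(z;d) = F^{(2)}(z;d) + Σ_{ℓ=1}^{L} β_ℓ [ −Σ_{i∈I₊^ℓ(z)∪I₀₊^ℓ(z;d)} (ψ^{(2)}_{ℓ-1}(θ,u₁,…,u_{ℓ-1}; d_θ,d_{u₁},…,d_{u_{ℓ-1}}))_i + Σ_{i∈I₋^ℓ(z)∪I₀₋^ℓ(z;d)} (ψ^{(2)}_{ℓ-1}(θ,u₁,…,u_{ℓ-1}; d_θ,d_{u₁},…,d_{u_{ℓ-1}}))_i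 + Σ_{i∈I₀₀^ℓ(z;d)} |(ψ^{(2)}_{ℓ-1}(θ,u₁,…,u_{ℓ-1}; d_θ,d_{u₁},…,d_{u_{ℓ-1}}))_i| ], where I₊^ℓ(z), I₋^ℓ(z), I₀^ℓ(z) are the sets of indices i for which (u_ℓ − ψ_{ℓ-1}(θ,u₁,…,u_{ℓ-1}))_i is positive, negative, zero respectively, and I₀₊^ℓ(z;d), I₀₋^ℓ(z;d), I₀₀^ℓ(z;d) are the subsets of I₀^ℓ(z) where (d_{u_ℓ} − ψ′_{ℓ-1}(θ,u₁,…,u_{ℓ-1}; d_θ,d_{u₁},…,d_{u_{ℓ-1}}))_i is positive, negative, zero respectively. -/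
open Filter Topology

noncomputable section

/-! ### Auxiliary scalar expansion calculus -/

section Exp2Aux

/-- Second-order one-sided expansion of a scalar function of `τ` at `0⁺`. -/
def Exp2 (φ : ℝ → ℝ) (a c e : ℝ) : Prop :=
  Tendsto (fun τ : ℝ => τ⁻¹ * (φ τ - a)) (𝓝[>] 0) (𝓝 c) ∧
  Tendsto (fun τ : ℝ => (τ ^ 2 / 2)⁻¹ * (φ τ - a - τ * c)) (𝓝[>] 0) (𝓝 e)

lemma ev_pos : ∀ᶠ τ : ℝ in 𝓝[>] 0, 0 < τ := eventually_mem_nhdsWithin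

lemma Exp2.add' {φ χ : ℝ → ℝ} {a c e a' c' e' : ℝ} (h : Exp2 φ a c e) (h' : Exp2 χ a' c' e') :
    Exp2 (fun τ => φ τ + χ τ) (a + a') (c + c') (e + e') :=
  ⟨(h.1.add h'.1).congr fun τ => by ring, (h.2.add h'.2).congr fun τ => by ring⟩

lemma Exp2.const_mul' {φ : ℝ → ℝ} {a c e : ℝ} (h : Exp2 φ a c e) (b : ℝ) :
    Exp2 (fun τ => b * φ τ) (b * a) (b * c) (b * e) :=
  ⟨(h.1.const_mul b).congr fun τ => by ring, (h.2.const_mul b).congr fun τ => by ring⟩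

lemma Exp2.neg' {φ : ℝ → ℝ} {a c e : ℝ} (h : Exp2 φ a c e) :
    Exp2 (fun τ => -φ τ) (-a) (-c) (-e) :=
  ⟨h.1.neg.congr fun τ => by ring, h.2.neg.congr fun τ => by ring⟩

lemma Exp2.sub' {φ χ : ℝ → ℝ} {a c e a' c' e' : ℝ} (h : Exp2 φ a c e) (h' : Exp2 χ a' c' e') :
    Exp2 (fun τ => φ τ - χ τ) (a - a') (c - c') (e - e') :=
  ⟨(h.1.sub h'.1).congr fun τ => by ring, (h.2.sub h'.2).congr fun τ => by ring⟩

lemma Exp2.congr'' {φ χ : ℝ → ℝ} {a c e : ℝ} (h : Exp2 φ a c e)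
    (hev : φ =ᶠ[𝓝[>] (0:ℝ)] χ) : Exp2 χ a c e := by
  constructor
  · exact h.1.congr' (hev.mono fun τ hτ => by rw [hτ])
  · exact h.2.congr' (hev.mono fun τ hτ => by rw [hτ])

lemma Exp2.linear (a b : ℝ) : Exp2 (fun τ => a + τ * b) a b 0 := by
  constructor
  · apply tendsto_const_nhds.congr'
    filter_upwards [ev_pos] with τ hτ
    field_simp
    ring
  · exact tendsto_const_nhds.congr fun τ => by ring

lemma Exp2.quad (a b c : ℝ) : Exp2 (fun τ => a + τ * b + τ ^ 2 * c) a b (2 * c) := by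
  constructor
  · have h : Tendsto (fun τ : ℝ => b + τ * c) (𝓝[>] 0) (𝓝 (b + 0 * c)) :=
      ((continuous_const.add (continuous_id.mul continuous_const)).tendsto 0).mono_left
        nhdsWithin_le_nhds
    rw [zero_mul, add_zero] at h
    apply h.congr'
    filter_upwards [ev_pos] with τ hτ
    field_simp
    ring
  · apply tendsto_const_nhds.congr'
    filter_upwards [ev_pos] with τ hτ
    have h2 : τ ^ 2 / 2 ≠ 0 := by positivity
    field_simp
    ring

lemma Exp2.tendsto' {φ : ℝ → ℝ} {a c e : ℝ} (h : Exp2 φ a c e) :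
    Tendsto φ (𝓝[>] 0) (𝓝 a) := by
  have hid : Tendsto (fun τ : ℝ => τ) (𝓝[>] (0:ℝ)) (𝓝 0) :=
    tendsto_id.mono_right nhdsWithin_le_nhds
  have h1 : Tendsto (fun τ : ℝ => τ * (τ⁻¹ * (φ τ - a)) + a) (𝓝[>] 0) (𝓝 (0 * c + a)) :=
    (hid.mul h.1).add tendsto_const_nhds
  rw [zero_mul, zero_add] at h1
  apply h1.congr'
  filter_upwards [ev_pos] with τ hτ
  field_simp
  ring

lemma Exp2.abs' {φ : ℝ → ℝ} {a c e : ℝ} (h : Exp2 φ a c e) :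
    Exp2 (fun τ => |φ τ|) |a|
      (if 0 < a then c else if a < 0 then -c else |c|)
      (if 0 < a ∨ (a = 0 ∧ 0 < c) then e
       else if a < 0 ∨ (a = 0 ∧ c < 0) then -e else |e|) := by
  rcases lt_trichotomy a 0 with ha | ha | ha
  · have hφ : ∀ᶠ τ in 𝓝[>] (0:ℝ), -φ τ = |φ τ| :=
      (h.tendsto'.eventually_lt_const ha).mono fun τ hτ => (abs_of_neg hτ).symm
    have h2 := h.neg'.congr'' hφ
    simpa [abs_of_neg ha, ha, lt_asymm ha, ha.ne] using h2
  · subst ha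
    rcases lt_trichotomy c 0 with hc | hc | hc
    · have hφ : ∀ᶠ τ in 𝓝[>] (0:ℝ), -φ τ = |φ τ| := by
        filter_upwards [ev_pos, h.1.eventually_lt_const hc] with τ hτ hlt
        have hφτ : φ τ = τ * (τ⁻¹ * (φ τ - 0)) := by field_simp; ring
        have : φ τ < 0 := by rw [hφτ]; exact mul_neg_of_pos_of_neg hτ hlt
        exact (abs_of_neg this).symm
      have h2 := h.neg'.congr'' hφ
      simpa [abs_of_neg hc, hc, lt_asymm hc, hc.ne] using h2
    · subst hc
      have e1 : (if (0:ℝ) < 0 then (0:ℝ) else if (0:ℝ) < 0 then -0 else |(0:ℝ)|) = 0 := by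
        norm_num
      have e2 : (if (0:ℝ) < 0 ∨ ((0:ℝ) = 0 ∧ (0:ℝ) < 0) then e
          else if (0:ℝ) < 0 ∨ ((0:ℝ) = 0 ∧ (0:ℝ) < 0) then -e else |e|) = |e| := by norm_num
      rw [e1, e2, abs_zero]
      constructor
      · have h1 := h.1.abs
        rw [abs_zero] at h1
        apply h1.congr'
        filter_upwards [ev_pos] with τ hτ
        rw [abs_mul, abs_of_pos (inv_pos.mpr hτ)]
        simp
      · have h2 := h.2.abs
        apply h2.congr'
        filter_upwards [ev_pos] with τ hτ
        rw [abs_mul, abs_of_pos (inv_pos.mpr (by positivity : (0:ℝ) < τ ^ 2 / 2))]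
        simp
    · have hφ : ∀ᶠ τ in 𝓝[>] (0:ℝ), φ τ = |φ τ| := by
        filter_upwards [ev_pos, h.1.eventually_const_lt hc] with τ hτ hlt
        have hφτ : φ τ = τ * (τ⁻¹ * (φ τ - 0)) := by field_simp; ring
        have : 0 < φ τ := by rw [hφτ]; exact mul_pos hτ hlt
        exact (abs_of_pos this).symm
      have h2 := h.congr'' hφ
      simpa [abs_of_pos hc, hc, lt_asymm hc, hc.ne'] using h2
  · have hφ : ∀ᶠ τ in 𝓝[>] (0:ℝ), φ τ = |φ τ| :=
      (h.tendsto'.eventually_const_lt ha).mono fun τ hτ => (abs_of_pos hτ).symm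
    have h2 := h.congr'' hφ
    simpa [abs_of_pos ha, ha, lt_asymm ha, ha.ne'] using h2

lemma Exp2.sum' {ι : Type*} (s : Finset ι) {φ : ι → ℝ → ℝ} {a c e : ι → ℝ}
    (h : ∀ i ∈ s, Exp2 (φ i) (a i) (c i) (e i)) :
    Exp2 (fun τ => ∑ i ∈ s, φ i τ) (∑ i ∈ s, a i) (∑ i ∈ s, c i) (∑ i ∈ s, e i) := by
  constructor
  · have := tendsto_finset_sum s fun i hi => (h i hi).1
    apply this.congr
    intro τ
    rw [← Finset.sum_sub_distrib, Finset.mul_sum]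
  · have := tendsto_finset_sum s fun i hi => (h i hi).2
    apply this.congr
    intro τ
    rw [Finset.mul_sum, ← Finset.sum_sub_distrib, ← Finset.sum_sub_distrib, Finset.mul_sum]

lemma sum_ite1 {m : ℕ} (a c : Fin m → ℝ) :
    (∑ i, if 0 < a i then c i else if a i < 0 then -c i else |c i|) =
    (∑ i ∈ Finset.univ.filter fun i => 0 < a i, c i) -
      (∑ i ∈ Finset.univ.filter fun i => a i < 0, c i) +
      ∑ i ∈ Finset.univ.filter (fun i => a i = 0), |c i| := by
  rw [Finset.sum_filter, Finset.sum_filter, Finset.sum_filter,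
    ← Finset.sum_sub_distrib, ← Finset.sum_add_distrib]
  refine Finset.sum_congr rfl fun i _ => ?_
  rcases lt_trichotomy (a i) 0 with h | h | h
  · simp [h, h.ne, lt_asymm h]
  · simp [h]
  · simp [h, h.ne', lt_asymm h]

lemma sum_ite2 {m : ℕ} (a c v : Fin m → ℝ) :
    (∑ i, if 0 < a i ∨ (a i = 0 ∧ 0 < c i) then -v i
          else if a i < 0 ∨ (a i = 0 ∧ c i < 0) then -(-v i) else |(-v i)|) =
    -(∑ i ∈ Finset.univ.filter fun i => 0 < a i ∨ (a i = 0 ∧ 0 < c i), v i) +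
      (∑ i ∈ Finset.univ.filter fun i => a i < 0 ∨ (a i = 0 ∧ c i < 0), v i) +
      ∑ i ∈ Finset.univ.filter (fun i => a i = 0 ∧ c i = 0), |v i| := by
  rw [Finset.sum_filter, Finset.sum_filter, Finset.sum_filter, ← Finset.sum_neg_distrib,
    ← Finset.sum_add_distrib, ← Finset.sum_add_distrib]
  refine Finset.sum_congr rfl fun i _ => ?_
  rcases lt_trichotomy (a i) 0 with h | h | h
  · simp [h, h.ne, lt_asymm h]
  · rcases lt_trichotomy (c i) 0 with h' | h' | h'
    · simp [h, h', h'.ne, lt_asymm h']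
    · simp [h, h']
    · simp [h, h', h'.ne', lt_asymm h']
  · simp [h, h.ne', lt_asymm h]

variable {E : Type*} [NormedAddCommGroup E] [NormedSpace ℝ E]

lemma hasDirDeriv2_iff_exp2 {f : E → ℝ} {x d : E} {y1 y2 : ℝ} :
    HasDirDeriv2 f x d y1 y2 ↔ Exp2 (fun τ => f (x + τ • d)) (f x) y1 y2 := by
  simp only [HasDirDeriv2, HasDirDeriv, Exp2, smul_eq_mul]

lemma exp2_proj {m : ℕ} {f : E → EuclideanSpace ℝ (Fin m)} {x d : E}
    {y1 y2 : EuclideanSpace ℝ (Fin m)} (h : HasDirDeriv2 f x d y1 y2) (i : Fin m) :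
    Exp2 (fun τ => f (x + τ • d) i) (f x i) (y1 i) (y2 i) := by
  have hc : Continuous fun v : EuclideanSpace ℝ (Fin m) => v i :=
    (EuclideanSpace.proj (𝕜 := ℝ) i).continuous
  constructor
  · have h1 := (hc.tendsto y1).comp h.1
    apply h1.congr
    intro τ
    simp [Function.comp, PiLp.smul_apply, PiLp.sub_apply, smul_eq_mul]
  · have h2 := (hc.tendsto y2).comp h.2
    apply h2.congr
    intro τ
    simp [Function.comp, PiLp.smul_apply, PiLp.sub_apply, smul_eq_mul]

end Exp2Aux

/-- Proposition 3.2: under Assumptions A1 and A2, `F` and `Θ` are twice directionally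
differentiable, with the stated formulas for their second-order directional derivatives. -/
theorem stmt7
    {n L : ℕ} (hn : 0 < n) (hL : 0 < L) {N : Fin L → ℕ} (hN : ∀ ℓ, 0 < N ℓ)
    (lam : ℝ) (hlam : 0 < lam) (β : Fin L → ℝ) (hβ : ∀ ℓ, 0 < β ℓ)
    (g : USp L N → ℝ) (hg0 : ∀ u, 0 ≤ g u)
    (ψ : (ℓ : Fin L) → ZSp n L N → EuclideanSpace ℝ (Fin (N ℓ)))
    (hdep : DepBelow ψ)
    -- Assumption A1
    (hgLip : LocallyLipschitz g) (hψLip : ∀ ℓ, LocallyLipschitz (ψ ℓ))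
    (gd : USp L N → USp L N → ℝ)
    (ψd : (ℓ : Fin L) → ZSp n L N → ZSp n L N → EuclideanSpace ℝ (Fin (N ℓ)))
    -- Assumption A2 (with first-order derivatives `gd`, `ψd` and second-order `gd2`, `ψd2`)
    (gd2 : USp L N → USp L N → ℝ)
    (hgd2 : ∀ u du, HasDirDeriv2 g u du (gd u du) (gd2 u du))
    (ψd2 : (ℓ : Fin L) → ZSp n L N → ZSp n L N → EuclideanSpace ℝ (Fin (N ℓ)))
    (hψd2 : ∀ ℓ z d, HasDirDeriv2 (ψ ℓ) z d (ψd ℓ z d) (ψd2 ℓ z d)) :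
    ∀ z d : ZSp n L N,
      HasDirDeriv2 (Fobj g lam) z d
        (gd (uOf z) (uOf d) + 2 * lam * (inner ℝ (thOf z) (thOf d) : ℝ))
        (gd2 (uOf z) (uOf d) + 2 * lam * ‖thOf d‖ ^ 2) ∧
      HasDirDeriv2 (Th g lam ψ β) z d
        (gd (uOf z) (uOf d) + 2 * lam * (inner ℝ (thOf z) (thOf d) : ℝ) +
          ∑ ℓ, β ℓ *
            ((∑ i ∈ Finset.univ.filter (fun i => 0 < uBlk z ℓ i - ψ ℓ z i),
                (uBlk d ℓ i - ψd ℓ z d i)) -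
              (∑ i ∈ Finset.univ.filter (fun i => uBlk z ℓ i - ψ ℓ z i < 0),
                (uBlk d ℓ i - ψd ℓ z d i)) +
              ∑ i ∈ Finset.univ.filter (fun i => uBlk z ℓ i - ψ ℓ z i = 0),
                |uBlk d ℓ i - ψd ℓ z d i|))
        (gd2 (uOf z) (uOf d) + 2 * lam * ‖thOf d‖ ^ 2 +
          ∑ ℓ, β ℓ *
            (-(∑ i ∈ Finset.univ.filter (fun i => 0 < uBlk z ℓ i - ψ ℓ z i ∨
                  (uBlk z ℓ i - ψ ℓ z i = 0 ∧ 0 < uBlk d ℓ i - ψd ℓ z d i)),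
                ψd2 ℓ z d i) +
              (∑ i ∈ Finset.univ.filter (fun i => uBlk z ℓ i - ψ ℓ z i < 0 ∨
                  (uBlk z ℓ i - ψ ℓ z i = 0 ∧ uBlk d ℓ i - ψd ℓ z d i < 0)),
                ψd2 ℓ z d i) +
              ∑ i ∈ Finset.univ.filter (fun i =>
                  uBlk z ℓ i - ψ ℓ z i = 0 ∧ uBlk d ℓ i - ψd ℓ z d i = 0),
                |ψd2 ℓ z d i|)) := by
  intro z d
  have hu : ∀ τ : ℝ, uOf (z + τ • d) = uOf z + τ • uOf d := by
    intro τ; ext j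
    simp [uOf, PiLp.add_apply, PiLp.smul_apply]
  have hth : ∀ τ : ℝ, thOf (z + τ • d) = thOf z + τ • thOf d := by
    intro τ; ext i
    simp [thOf, PiLp.add_apply, PiLp.smul_apply]
  have hub : ∀ (τ : ℝ) (ℓ : Fin L) (i : Fin (N ℓ)),
      uBlk z ℓ i + τ * uBlk d ℓ i = uBlk (z + τ • d) ℓ i := by
    intro τ ℓ i; simp [uBlk, PiLp.add_apply, PiLp.smul_apply, smul_eq_mul]
  -- the smooth part
  have hg : Exp2 (fun τ => g (uOf (z + τ • d))) (g (uOf z)) (gd (uOf z) (uOf d))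
      (gd2 (uOf z) (uOf d)) := by
    have h0 := hasDirDeriv2_iff_exp2.mp (hgd2 (uOf z) (uOf d))
    exact h0.congr'' (Filter.Eventually.of_forall fun τ => by simp only [hu])
  have hquad : Exp2 (fun τ => lam * ‖thOf (z + τ • d)‖ ^ 2) (lam * ‖thOf z‖ ^ 2)
      (2 * lam * (inner ℝ (thOf z) (thOf d) : ℝ)) (2 * lam * ‖thOf d‖ ^ 2) := by
    have hq := Exp2.quad (lam * ‖thOf z‖ ^ 2) (2 * lam * (inner ℝ (thOf z) (thOf d) : ℝ))
        (lam * ‖thOf d‖ ^ 2)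
    rw [show 2 * (lam * ‖thOf d‖ ^ 2) = 2 * lam * ‖thOf d‖ ^ 2 by ring] at hq
    apply hq.congr'' (Filter.Eventually.of_forall fun τ => ?_)
    rw [hth τ, norm_add_sq_real, real_inner_smul_right, norm_smul]
    simp only [Real.norm_eq_abs, mul_pow, sq_abs]
    ring
  have hF : Exp2 (fun τ => Fobj g lam (z + τ • d)) (Fobj g lam z)
      (gd (uOf z) (uOf d) + 2 * lam * (inner ℝ (thOf z) (thOf d) : ℝ))
      (gd2 (uOf z) (uOf d) + 2 * lam * ‖thOf d‖ ^ 2) := hg.add' hquad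
  refine ⟨hasDirDeriv2_iff_exp2.mpr hF, ?_⟩
  -- the penalty part
  have hpen : ∀ ℓ : Fin L,
      Exp2 (fun τ => β ℓ * ∑ i, |uBlk (z + τ • d) ℓ i - ψ ℓ (z + τ • d) i|)
        (β ℓ * ∑ i, |uBlk z ℓ i - ψ ℓ z i|)
        (β ℓ * ∑ i,
          (if 0 < uBlk z ℓ i - ψ ℓ z i then uBlk d ℓ i - ψd ℓ z d i
           else if uBlk z ℓ i - ψ ℓ z i < 0 then -(uBlk d ℓ i - ψd ℓ z d i)
           else |uBlk d ℓ i - ψd ℓ z d i|))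
        (β ℓ * ∑ i,
          (if 0 < uBlk z ℓ i - ψ ℓ z i ∨
              (uBlk z ℓ i - ψ ℓ z i = 0 ∧ 0 < uBlk d ℓ i - ψd ℓ z d i) then -ψd2 ℓ z d i
           else if uBlk z ℓ i - ψ ℓ z i < 0 ∨
              (uBlk z ℓ i - ψ ℓ z i = 0 ∧ uBlk d ℓ i - ψd ℓ z d i < 0) then -(-ψd2 ℓ z d i)
           else |(-ψd2 ℓ z d i)|)) := by
    intro ℓ
    have hi : ∀ i : Fin (N ℓ),
        Exp2 (fun τ => |uBlk (z + τ • d) ℓ i - ψ ℓ (z + τ • d) i|)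
          |uBlk z ℓ i - ψ ℓ z i|
          (if 0 < uBlk z ℓ i - ψ ℓ z i then uBlk d ℓ i - ψd ℓ z d i
           else if uBlk z ℓ i - ψ ℓ z i < 0 then -(uBlk d ℓ i - ψd ℓ z d i)
           else |uBlk d ℓ i - ψd ℓ z d i|)
          (if 0 < uBlk z ℓ i - ψ ℓ z i ∨
              (uBlk z ℓ i - ψ ℓ z i = 0 ∧ 0 < uBlk d ℓ i - ψd ℓ z d i) then -ψd2 ℓ z d i
           else if uBlk z ℓ i - ψ ℓ z i < 0 ∨
              (uBlk z ℓ i - ψ ℓ z i = 0 ∧ uBlk d ℓ i - ψd ℓ z d i < 0) then -(-ψd2 ℓ z d i)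
           else |(-ψd2 ℓ z d i)|) := by
      intro i
      have hψ : Exp2 (fun τ => ψ ℓ (z + τ • d) i) (ψ ℓ z i) (ψd ℓ z d i) (ψd2 ℓ z d i) :=
        exp2_proj (hψd2 ℓ z d) i
      have hφ := (Exp2.linear (uBlk z ℓ i) (uBlk d ℓ i)).sub' hψ
      rw [zero_sub] at hφ
      have hφ' : Exp2 (fun τ => uBlk (z + τ • d) ℓ i - ψ ℓ (z + τ • d) i)
          (uBlk z ℓ i - ψ ℓ z i) (uBlk d ℓ i - ψd ℓ z d i) (-ψd2 ℓ z d i) :=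
        hφ.congr'' (Filter.Eventually.of_forall fun τ => by simp only [hub])
      exact hφ'.abs'
    exact (Exp2.sum' Finset.univ fun i _ => hi i).const_mul' (β ℓ)
  have hTot := hF.add' (Exp2.sum' Finset.univ fun ℓ _ => hpen ℓ)
  apply hasDirDeriv2_iff_exp2.mpr
  have hC : ∀ ℓ : Fin L,
      ((∑ i ∈ Finset.univ.filter (fun i => 0 < uBlk z ℓ i - ψ ℓ z i),
          (uBlk d ℓ i - ψd ℓ z d i)) -
        (∑ i ∈ Finset.univ.filter (fun i => uBlk z ℓ i - ψ ℓ z i < 0),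
          (uBlk d ℓ i - ψd ℓ z d i)) +
        ∑ i ∈ Finset.univ.filter (fun i => uBlk z ℓ i - ψ ℓ z i = 0),
          |uBlk d ℓ i - ψd ℓ z d i|) =
      ∑ i, (if 0 < uBlk z ℓ i - ψ ℓ z i then uBlk d ℓ i - ψd ℓ z d i
            else if uBlk z ℓ i - ψ ℓ z i < 0 then -(uBlk d ℓ i - ψd ℓ z d i)
            else |uBlk d ℓ i - ψd ℓ z d i|) := fun ℓ =>
    (sum_ite1 (fun i => uBlk z ℓ i - ψ ℓ z i) (fun i => uBlk d ℓ i - ψd ℓ z d i)).symm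
  have hE : ∀ ℓ : Fin L,
      (-(∑ i ∈ Finset.univ.filter (fun i => 0 < uBlk z ℓ i - ψ ℓ z i ∨
            (uBlk z ℓ i - ψ ℓ z i = 0 ∧ 0 < uBlk d ℓ i - ψd ℓ z d i)),
          ψd2 ℓ z d i) +
        (∑ i ∈ Finset.univ.filter (fun i => uBlk z ℓ i - ψ ℓ z i < 0 ∨
            (uBlk z ℓ i - ψ ℓ z i = 0 ∧ uBlk d ℓ i - ψd ℓ z d i < 0)),
          ψd2 ℓ z d i) +
        ∑ i ∈ Finset.univ.filter (fun i =>
            uBlk z ℓ i - ψ ℓ z i = 0 ∧ uBlk d ℓ i - ψd ℓ z d i = 0),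
          |ψd2 ℓ z d i|) =
      ∑ i, (if 0 < uBlk z ℓ i - ψ ℓ z i ∨
              (uBlk z ℓ i - ψ ℓ z i = 0 ∧ 0 < uBlk d ℓ i - ψd ℓ z d i) then -ψd2 ℓ z d i
            else if uBlk z ℓ i - ψ ℓ z i < 0 ∨
              (uBlk z ℓ i - ψ ℓ z i = 0 ∧ uBlk d ℓ i - ψd ℓ z d i < 0) then -(-ψd2 ℓ z d i)
            else |(-ψd2 ℓ z d i)|) := fun ℓ =>
    (sum_ite2 (fun i => uBlk z ℓ i - ψ ℓ z i) (fun i => uBlk d ℓ i - ψd ℓ z d i)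
      (fun i => ψd2 ℓ z d i)).symm
  simp only [hC, hE]
  exact hTot
end
end

section
/- Under Assumption A1, for every feasible point z = (θ,u₁,…,u_L) ∈ F₀, the tangent cone of F₀ at z has the closed form T_{F₀}(z) = {d = (d_θ,d_{u₁},…,d_{u_L}) ∈ ℝ^{N̄} : d_{u_ℓ} = ψ′_{ℓ-1}(θ,u₁,…,u_{ℓ-1}; d_θ,d_{u₁},…,d_{u_{ℓ-1}}) for all ℓ = 1,…,L}. -/
open Filter Topology

noncomputable section

section Stmt8Aux

open Filter Topology

/-- Coordinatewise characterization of convergence in Euclidean space. -/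
lemma stmt8_tendsto_euclid {ι : Type*} [Fintype ι] {f : ℕ → EuclideanSpace ℝ ι}
    {x : EuclideanSpace ℝ ι} :
    Tendsto f atTop (𝓝 x) ↔ ∀ i, Tendsto (fun k => f k i) atTop (𝓝 (x i)) := by
  constructor
  · intro h i
    exact ((EuclideanSpace.proj (𝕜 := ℝ) i).continuous.tendsto x).comp h
  · intro h
    set e := (PiLp.continuousLinearEquiv 2 ℝ (fun _ : ι => ℝ))
    have h1 : Tendsto (fun k => e (f k)) atTop (𝓝 (e x)) := by
      rw [tendsto_pi_nhds]; exact fun i => h i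
    have h2 := (e.symm.continuous.tendsto (e x)).comp h1
    simpa [Function.comp_def] using h2

variable {E F : Type*} [NormedAddCommGroup E] [NormedSpace ℝ E]
  [NormedAddCommGroup F] [NormedSpace ℝ F]

/-- If `(p k - q k)/τ k → 0` with `p, q → z` and `f` locally Lipschitz, then
`(f (p k) - f (q k))/τ k → 0`. -/
lemma stmt8_lip_ratio {f : E → F} {z : E} (hf : LocallyLipschitz f)
    {p q : ℕ → E} {τ : ℕ → ℝ} (hτpos : ∀ k, 0 < τ k)
    (hp : Tendsto p atTop (𝓝 z)) (hq : Tendsto q atTop (𝓝 z))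
    (hpq : Tendsto (fun k => (τ k)⁻¹ • (p k - q k)) atTop (𝓝 0)) :
    Tendsto (fun k => (τ k)⁻¹ • (f (p k) - f (q k))) atTop (𝓝 0) := by
  obtain ⟨K, t, ht, hlip⟩ := hf z
  rw [tendsto_zero_iff_norm_tendsto_zero]
  have hg : Tendsto (fun k => (K : ℝ) * ‖(τ k)⁻¹ • (p k - q k)‖) atTop (𝓝 0) := by
    have := (hpq.norm).const_mul (K : ℝ)
    simpa using this
  refine squeeze_zero' (Eventually.of_forall fun k => norm_nonneg _) ?_ hg
  filter_upwards [hp.eventually_mem ht, hq.eventually_mem ht] with k hpk hqk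
  have hd : dist (f (p k)) (f (q k)) ≤ (K : ℝ) * dist (p k) (q k) :=
    hlip.dist_le_mul _ hpk _ hqk
  have hτ := (hτpos k).le
  rw [norm_smul, norm_smul, Real.norm_eq_abs, abs_of_nonneg (inv_nonneg.2 hτ)]
  rw [← dist_eq_norm, ← dist_eq_norm]
  calc (τ k)⁻¹ * dist (f (p k)) (f (q k)) ≤ (τ k)⁻¹ * ((K:ℝ) * dist (p k) (q k)) := by
        exact mul_le_mul_of_nonneg_left hd (inv_nonneg.2 hτ)
    _ = (K:ℝ) * ((τ k)⁻¹ * dist (p k) (q k)) := by ring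

variable {n L : ℕ} {N : Fin L → ℕ}

/-- One step of the recursion defining the feasible point with parameter block `b`. -/
def stmt8Phi (ψ : (ℓ : Fin L) → ZSp n L N → EuclideanSpace ℝ (Fin (N ℓ)))
    (b : ZSp n L N) (w : ZSp n L N) : ZSp n L N :=
  WithLp.toLp 2 (fun a : Fin n ⊕ (Σ ℓ : Fin L, Fin (N ℓ)) => match a with
  | Sum.inl i => b (Sum.inl i)
  | Sum.inr ⟨j, i⟩ => ψ j w i)

lemma stmt8_iter_agree {ψ : (ℓ : Fin L) → ZSp n L N → EuclideanSpace ℝ (Fin (N ℓ))}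
    (hdep : DepBelow ψ) (b : ZSp n L N) :
    ∀ m : ℕ, ∀ a a' : ZSp n L N,
      (∀ i, (stmt8Phi ψ b)^[m+1] a (Sum.inl i) = (stmt8Phi ψ b)^[m+1] a' (Sum.inl i)) ∧
      (∀ j : Fin L, j.1 < m → ∀ i,
        (stmt8Phi ψ b)^[m+1] a (Sum.inr ⟨j, i⟩) = (stmt8Phi ψ b)^[m+1] a' (Sum.inr ⟨j, i⟩)) := by
  intro m
  induction m with
  | zero =>
    intro a a'
    exact ⟨fun i => rfl, fun j hj => absurd hj (Nat.not_lt_zero _)⟩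
  | succ m ih =>
    intro a a'
    rw [Function.iterate_succ_apply' (stmt8Phi ψ b) (m+1) a,
        Function.iterate_succ_apply' (stmt8Phi ψ b) (m+1) a']
    refine ⟨fun i => rfl, fun j hj i => ?_⟩
    show ψ j ((stmt8Phi ψ b)^[m+1] a) i = ψ j ((stmt8Phi ψ b)^[m+1] a') i
    have hth : thOf ((stmt8Phi ψ b)^[m+1] a) = thOf ((stmt8Phi ψ b)^[m+1] a') :=
      congrArg (WithLp.toLp 2) (funext fun i => (ih a a').1 i)
    have hu : ∀ j' : Fin L, j' < j →
        uBlk ((stmt8Phi ψ b)^[m+1] a) j' = uBlk ((stmt8Phi ψ b)^[m+1] a') j' := by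
      intro j' hj'
      exact congrArg (WithLp.toLp 2) <| funext fun i => (ih a a').2 j' (Nat.lt_of_lt_of_le hj' (Nat.le_of_lt_succ hj)) i
    exact congrArg (fun v => v i) (hdep j _ _ hth hu)

lemma stmt8_iter_fixed {ψ : (ℓ : Fin L) → ZSp n L N → EuclideanSpace ℝ (Fin (N ℓ))}
    (hdep : DepBelow ψ) (b : ZSp n L N) :
    stmt8Phi ψ b ((stmt8Phi ψ b)^[L+1] b) = (stmt8Phi ψ b)^[L+1] b := by
  have h := stmt8_iter_agree hdep b L (stmt8Phi ψ b b) b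
  have h1 : stmt8Phi ψ b ((stmt8Phi ψ b)^[L+1] b) = (stmt8Phi ψ b)^[L+1] (stmt8Phi ψ b b) := by
    rw [← Function.iterate_succ_apply' (stmt8Phi ψ b) (L+1) b,
        Function.iterate_succ_apply (stmt8Phi ψ b) (L+1) b]
  rw [h1]
  refine PiLp.ext fun a => ?_
  rcases a with i | ⟨j, i⟩
  · exact h.1 i
  · exact h.2 j j.isLt i

lemma stmt8_iter_feas {ψ : (ℓ : Fin L) → ZSp n L N → EuclideanSpace ℝ (Fin (N ℓ))}
    (hdep : DepBelow ψ) (b : ZSp n L N) :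
    (stmt8Phi ψ b)^[L+1] b ∈ Feas ψ := by
  intro ℓ
  refine PiLp.ext fun i => ?_
  conv_lhs => rw [uBlk, ← stmt8_iter_fixed hdep b]
  rfl

lemma stmt8_iter_inl {ψ : (ℓ : Fin L) → ZSp n L N → EuclideanSpace ℝ (Fin (N ℓ))}
    (hdep : DepBelow ψ) (b : ZSp n L N) (i : Fin n) :
    (stmt8Phi ψ b)^[L+1] b (Sum.inl i) = b (Sum.inl i) := by
  conv_lhs => rw [← stmt8_iter_fixed hdep b]
  rfl

end Stmt8Aux

/-- Theorem 3.1: under Assumption A1, the tangent cone of the feasible set `F₀` at any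
feasible point has the stated closed form. -/
theorem stmt8
    {n L : ℕ} (hn : 0 < n) (hL : 0 < L) {N : Fin L → ℕ} (hN : ∀ ℓ, 0 < N ℓ)
    (ψ : (ℓ : Fin L) → ZSp n L N → EuclideanSpace ℝ (Fin (N ℓ)))
    (hdep : DepBelow ψ)
    -- Assumption A1
    (hψLip : ∀ ℓ, LocallyLipschitz (ψ ℓ))
    (ψd : (ℓ : Fin L) → ZSp n L N → ZSp n L N → EuclideanSpace ℝ (Fin (N ℓ)))
    (hψd : ∀ ℓ z d, HasDirDeriv (ψ ℓ) z d (ψd ℓ z d)) :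
    ∀ z ∈ Feas ψ,
      tangentCone (Feas ψ) z = {d : ZSp n L N | ∀ ℓ, uBlk d ℓ = ψd ℓ z d} := by
  intro z hz
  ext d
  simp only [tangentCone, Set.mem_setOf_eq]
  constructor
  · -- ⊆
    rintro ⟨w, τ, hwF, hwz, hτpos, hτ0, hlim⟩ ℓ
    have hττ : Tendsto τ atTop (𝓝[>] (0:ℝ)) :=
      tendsto_nhdsWithin_of_tendsto_nhds_of_eventually_within _ hτ0
        (Eventually.of_forall fun k => hτpos k)
    -- block-level limit of the difference quotients
    have hblk : Tendsto (fun k => (τ k)⁻¹ • (uBlk (w k) ℓ - uBlk z ℓ)) atTop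
        (𝓝 (uBlk d ℓ)) := by
      rw [stmt8_tendsto_euclid]
      intro i
      exact (stmt8_tendsto_euclid.1 hlim) (Sum.inr ⟨ℓ, i⟩)
    have hb : Tendsto (fun k => z + τ k • d) atTop (𝓝 z) := by
      have h1 : Tendsto (fun k => τ k • d) atTop (𝓝 ((0:ℝ) • d)) := hτ0.smul_const d
      simpa using tendsto_const_nhds.add h1
    have hratio : Tendsto (fun k => (τ k)⁻¹ • (w k - (z + τ k • d))) atTop (𝓝 0) := by
      have h1 : Tendsto (fun k => (τ k)⁻¹ • (w k - z) - d) atTop (𝓝 (d - d)) :=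
        hlim.sub tendsto_const_nhds
      rw [sub_self] at h1
      have heq : (fun k => (τ k)⁻¹ • (w k - (z + τ k • d)))
          = fun k => (τ k)⁻¹ • (w k - z) - d := by
        funext k
        rw [show w k - (z + τ k • d) = (w k - z) - τ k • d by abel, smul_sub,
          inv_smul_smul₀ (hτpos k).ne']
      rw [heq]; exact h1
    have hA : Tendsto (fun k => (τ k)⁻¹ • (ψ ℓ (w k) - ψ ℓ (z + τ k • d))) atTop (𝓝 0) :=
      stmt8_lip_ratio (hψLip ℓ) hτpos hwz hb hratio
    have hB : Tendsto (fun k => (τ k)⁻¹ • (ψ ℓ (z + τ k • d) - ψ ℓ z)) atTop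
        (𝓝 (ψd ℓ z d)) := (hψd ℓ z d).comp hττ
    have hC : Tendsto (fun k => (τ k)⁻¹ • (ψ ℓ (w k) - ψ ℓ z)) atTop (𝓝 (ψd ℓ z d)) := by
      have h := hA.add hB
      rw [zero_add] at h
      have heq : (fun k => (τ k)⁻¹ • (ψ ℓ (w k) - ψ ℓ z))
          = fun k => (τ k)⁻¹ • (ψ ℓ (w k) - ψ ℓ (z + τ k • d))
            + (τ k)⁻¹ • (ψ ℓ (z + τ k • d) - ψ ℓ z) := by
        funext k; rw [← smul_add, sub_add_sub_cancel]
      rw [heq]; exact h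
    have hfin : (fun k => (τ k)⁻¹ • (uBlk (w k) ℓ - uBlk z ℓ))
        = fun k => (τ k)⁻¹ • (ψ ℓ (w k) - ψ ℓ z) := by
      funext k; rw [hwF k ℓ, hz ℓ]
    rw [hfin] at hblk
    exact tendsto_nhds_unique hblk hC
  · -- ⊇
    intro hd
    set τ : ℕ → ℝ := fun k => ((k : ℝ) + 1)⁻¹ with hτdef
    have hτpos : ∀ k, 0 < τ k := fun k => by positivity
    have hτ0 : Tendsto τ atTop (𝓝 0) := by
      have : Tendsto (fun n : ℕ => 1 / ((n : ℝ) + 1)) atTop (𝓝 0) :=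
        tendsto_one_div_add_atTop_nhds_zero_nat
      simpa [hτdef, one_div] using this
    have hττ : Tendsto τ atTop (𝓝[>] (0:ℝ)) :=
      tendsto_nhdsWithin_of_tendsto_nhds_of_eventually_within _ hτ0
        (Eventually.of_forall fun k => hτpos k)
    set b : ℕ → ZSp n L N := fun k => z + τ k • d with hbdef
    set W : ℕ → ZSp n L N := fun k => (stmt8Phi ψ (b k))^[L+1] (b k) with hWdef
    have hWF : ∀ k, W k ∈ Feas ψ := fun k => stmt8_iter_feas hdep (b k)
    have hWinl : ∀ k i, W k (Sum.inl i) = b k (Sum.inl i) :=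
      fun k i => stmt8_iter_inl hdep (b k) i
    have hb : Tendsto b atTop (𝓝 z) := by
      have h1 : Tendsto (fun k => τ k • d) atTop (𝓝 ((0:ℝ) • d)) := hτ0.smul_const d
      simpa [hbdef] using tendsto_const_nhds.add h1
    have key : ∀ m : ℕ, ∀ ℓ : Fin L, ℓ.1 = m →
        Tendsto (fun k => (τ k)⁻¹ • (uBlk (W k) ℓ - uBlk z ℓ)) atTop (𝓝 (uBlk d ℓ)) := by
      intro m
      induction m using Nat.strong_induction_on with
      | _ m IH =>
      intro ℓ hℓ
      have IHblk : ∀ j : Fin L, j < ℓ →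
          Tendsto (fun k => (τ k)⁻¹ • (uBlk (W k) j - uBlk z j)) atTop (𝓝 (uBlk d j)) :=
        fun j hj => IH j.1 (hℓ ▸ hj) j rfl
      set v : ℕ → ZSp n L N := fun k => WithLp.toLp 2 (fun a : Fin n ⊕ (Σ ℓ : Fin L, Fin (N ℓ)) =>
        match a with
        | Sum.inl i => W k (Sum.inl i)
        | Sum.inr ⟨j, i⟩ => if j < ℓ then W k (Sum.inr ⟨j, i⟩) else b k (Sum.inr ⟨j, i⟩))
        with hvdef
      have hψv : ∀ k, ψ ℓ (v k) = ψ ℓ (W k) := by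
        intro k
        refine hdep ℓ (v k) (W k) rfl (fun j hj => congrArg (WithLp.toLp 2) (funext fun i => ?_))
        show (if j < ℓ then W k (Sum.inr ⟨j, i⟩) else b k (Sum.inr ⟨j, i⟩))
            = W k (Sum.inr ⟨j, i⟩)
        rw [if_pos hj]
      have hs : Tendsto (fun k => (τ k)⁻¹ • (v k - b k)) atTop (𝓝 0) := by
        rw [stmt8_tendsto_euclid]
        rintro (i | ⟨j, i⟩)
        · have heq : (fun k => ((τ k)⁻¹ • (v k - b k)) (Sum.inl i)) = fun _ => (0:ℝ) := by
            funext k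
            show (τ k)⁻¹ * (v k (Sum.inl i) - b k (Sum.inl i)) = 0
            rw [show v k (Sum.inl i) = b k (Sum.inl i) from hWinl k i, sub_self, mul_zero]
          rw [heq]
          exact tendsto_const_nhds
        · by_cases hj : j < ℓ
          · have hco := (stmt8_tendsto_euclid.1 (IHblk j hj)) i
            have h1 : Tendsto (fun k => (τ k)⁻¹ * (W k (Sum.inr ⟨j, i⟩) - z (Sum.inr ⟨j, i⟩))
                - d (Sum.inr ⟨j, i⟩)) atTop (𝓝 (d (Sum.inr ⟨j, i⟩) - d (Sum.inr ⟨j, i⟩))) :=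
              Tendsto.sub hco tendsto_const_nhds
            rw [sub_self] at h1
            have heq : (fun k => ((τ k)⁻¹ • (v k - b k)) (Sum.inr ⟨j, i⟩))
                = fun k => (τ k)⁻¹ * (W k (Sum.inr ⟨j, i⟩) - z (Sum.inr ⟨j, i⟩))
                  - d (Sum.inr ⟨j, i⟩) := by
              funext k
              show (τ k)⁻¹ * (v k (Sum.inr ⟨j, i⟩) - b k (Sum.inr ⟨j, i⟩)) = _
              have hv : v k (Sum.inr ⟨j, i⟩) = W k (Sum.inr ⟨j, i⟩) := if_pos hj
              have hbv : b k (Sum.inr ⟨j, i⟩) = z (Sum.inr ⟨j, i⟩) + τ k * d (Sum.inr ⟨j, i⟩) :=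
                rfl
              rw [hv, hbv]
              have hτne := (hτpos k).ne'
              field_simp
              ring
            rw [heq]
            exact h1
          · have heq : (fun k => ((τ k)⁻¹ • (v k - b k)) (Sum.inr ⟨j, i⟩)) = fun _ => (0:ℝ) := by
              funext k
              show (τ k)⁻¹ * (v k (Sum.inr ⟨j, i⟩) - b k (Sum.inr ⟨j, i⟩)) = 0
              have hv : v k (Sum.inr ⟨j, i⟩) = b k (Sum.inr ⟨j, i⟩) := if_neg hj
              rw [hv, sub_self, mul_zero]
            rw [heq]
            exact tendsto_const_nhds
      have hv : Tendsto v atTop (𝓝 z) := by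
        have h1 : Tendsto (fun k => τ k • ((τ k)⁻¹ • (v k - b k))) atTop
            (𝓝 ((0:ℝ) • (0 : ZSp n L N))) := hτ0.smul hs
        have heq : (fun k => τ k • ((τ k)⁻¹ • (v k - b k))) = fun k => v k - b k := by
          funext k; rw [smul_inv_smul₀ (hτpos k).ne']
        rw [heq, zero_smul] at h1
        have h2 := h1.add hb
        simpa using h2
      have hA : Tendsto (fun k => (τ k)⁻¹ • (ψ ℓ (v k) - ψ ℓ (b k))) atTop (𝓝 0) :=
        stmt8_lip_ratio (hψLip ℓ) hτpos hv hb hs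
      have hB : Tendsto (fun k => (τ k)⁻¹ • (ψ ℓ (b k) - ψ ℓ z)) atTop (𝓝 (ψd ℓ z d)) :=
        (hψd ℓ z d).comp hττ
      have hC : Tendsto (fun k => (τ k)⁻¹ • (ψ ℓ (v k) - ψ ℓ z)) atTop (𝓝 (ψd ℓ z d)) := by
        have h := hA.add hB
        rw [zero_add] at h
        have heq : (fun k => (τ k)⁻¹ • (ψ ℓ (v k) - ψ ℓ z))
            = fun k => (τ k)⁻¹ • (ψ ℓ (v k) - ψ ℓ (b k))
              + (τ k)⁻¹ • (ψ ℓ (b k) - ψ ℓ z) := by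
          funext k; rw [← smul_add, sub_add_sub_cancel]
        rw [heq]; exact h
      have hfin : (fun k => (τ k)⁻¹ • (uBlk (W k) ℓ - uBlk z ℓ))
          = fun k => (τ k)⁻¹ • (ψ ℓ (v k) - ψ ℓ z) := by
        funext k; rw [hWF k ℓ, hz ℓ, hψv k]
      rw [hfin, hd ℓ]
      exact hC
    have hfull : Tendsto (fun k => (τ k)⁻¹ • (W k - z)) atTop (𝓝 d) := by
      rw [stmt8_tendsto_euclid]
      rintro (i | ⟨j, i⟩)
      · have heq : (fun k => ((τ k)⁻¹ • (W k - z)) (Sum.inl i)) = fun _ => d (Sum.inl i) := by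
          funext k
          show (τ k)⁻¹ * (W k (Sum.inl i) - z (Sum.inl i)) = d (Sum.inl i)
          have hW : W k (Sum.inl i) = z (Sum.inl i) + τ k * d (Sum.inl i) := hWinl k i
          rw [hW]
          field_simp
          rw [add_sub_cancel_left, mul_div_cancel_left₀ _ (hτpos k).ne']
        rw [heq]
        exact tendsto_const_nhds
      · exact (stmt8_tendsto_euclid.1 (key j.1 j rfl)) i
    have hWz : Tendsto W atTop (𝓝 z) := by
      have h1 : Tendsto (fun k => τ k • ((τ k)⁻¹ • (W k - z))) atTop
          (𝓝 ((0:ℝ) • d)) := hτ0.smul hfull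
      have heq : (fun k => τ k • ((τ k)⁻¹ • (W k - z))) = fun k => W k - z := by
        funext k; rw [smul_inv_smul₀ (hτpos k).ne']
      rw [heq, zero_smul] at h1
      have h2 := h1.add (tendsto_const_nhds (α := ℕ) (x := z))
      simpa using h2
    exact ⟨W, τ, hWF, hWz, hτpos, hτ0, hfull⟩
end
end

section
/- Under Assumption A1: (i) if θ is a d-stationary point of (P), then z := (θ,u₁,…,u_L) with u_ℓ := ψ_{ℓ-1}(θ,u₁,…,u_{ℓ-1}) for ℓ=1,…,L is a d-stationary point of (P0); (ii) conversely, if z = (θ,u) is a d-stationary point of (P0), then θ is a d-stationary point of (P). -/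
open Filter Topology

noncomputable section

section AuxGeneral
variable {α : Type*} {E F : Type*} [NormedAddCommGroup E] [NormedSpace ℝ E]
  [NormedAddCommGroup F] [NormedSpace ℝ F]

lemma hasDirDeriv_unique {f : E → F} {x d : E} {y y' : F}
    (h : HasDirDeriv f x d y) (h' : HasDirDeriv f x d y') : y = y' :=
  tendsto_nhds_unique h h'

lemma dirD_eq {f : E → F} {x d : E} {y : F} (h : HasDirDeriv f x d y) : dirD f x d = y := by
  have hex : ∃ y, HasDirDeriv f x d y := ⟨y, h⟩
  rw [dirD, dif_pos hex]
  exact hasDirDeriv_unique hex.choose_spec h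

lemma hasDirDeriv_add {f g : E → F} {x d : E} {y₁ y₂ : F} (hf : HasDirDeriv f x d y₁)
    (hg : HasDirDeriv g x d y₂) : HasDirDeriv (fun t => f t + g t) x d (y₁ + y₂) := by
  have h := Tendsto.add hf hg
  refine h.congr fun τ => ?_
  rw [← smul_add]
  congr 1
  exact sub_add_sub_comm _ _ _ _

lemma hadamard {f : E → F} {x d : E} {y : F} (hlip : LocallyLipschitz f)
    (hdd : HasDirDeriv f x d y) {l : Filter α} {τ : α → ℝ} {e : α → E}
    (hτ : Tendsto τ l (𝓝[>] 0)) (he : Tendsto e l (𝓝 d)) :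
    Tendsto (fun a => (τ a)⁻¹ • (f (x + τ a • e a) - f x)) l (𝓝 y) := by
  obtain ⟨K, t, ht, hK⟩ := hlip x
  obtain ⟨r, hr0, hball⟩ := Metric.mem_nhds_iff.1 ht
  set M : ℝ := ‖d‖ + 1 with hM
  have hM0 : 0 < M := by positivity
  have hτ0 : Tendsto τ l (𝓝 0) := hτ.mono_right nhdsWithin_le_nhds
  have hτpos : ∀ᶠ a in l, 0 < τ a := hτ self_mem_nhdsWithin
  have hτsmall : ∀ᶠ a in l, τ a < r / M :=
    hτ0.eventually_lt_const (by positivity)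
  have hee : ∀ᶠ a in l, ‖e a‖ < M :=
    he.norm.eventually_lt_const (by simp [hM])
  have h1 : Tendsto (fun a => (τ a)⁻¹ • (f (x + τ a • d) - f x)) l (𝓝 y) := hdd.comp hτ
  have h2 : Tendsto (fun a => (τ a)⁻¹ • (f (x + τ a • e a) - f (x + τ a • d))) l (𝓝 0) := by
    have hbd : ∀ᶠ a in l, ‖(τ a)⁻¹ • (f (x + τ a • e a) - f (x + τ a • d))‖
        ≤ (K : ℝ) * ‖e a - d‖ := by
      filter_upwards [hτpos, hτsmall, hee] with a ha hs hn
      have hae : x + τ a • e a ∈ t := by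
        apply hball
        simp only [Metric.mem_ball, dist_eq_norm, add_sub_cancel_left, norm_smul,
          Real.norm_eq_abs, abs_of_pos ha]
        calc τ a * ‖e a‖ ≤ τ a * M := by nlinarith [norm_nonneg (e a)]
          _ < (r / M) * M := by nlinarith
          _ = r := by field_simp
      have had : x + τ a • d ∈ t := by
        apply hball
        simp only [Metric.mem_ball, dist_eq_norm, add_sub_cancel_left, norm_smul,
          Real.norm_eq_abs, abs_of_pos ha]
        calc τ a * ‖d‖ ≤ τ a * M := by nlinarith [norm_nonneg d]
          _ < (r / M) * M := by nlinarith
          _ = r := by field_simp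
      have hdist := hK.dist_le_mul _ hae _ had
      rw [dist_eq_norm, dist_eq_norm] at hdist
      have harg : (x + τ a • e a) - (x + τ a • d) = τ a • (e a - d) := by
        rw [smul_sub]; abel
      rw [harg, norm_smul, Real.norm_eq_abs, abs_of_pos ha] at hdist
      rw [norm_smul, Real.norm_eq_abs, abs_of_pos (inv_pos.2 ha)]
      calc (τ a)⁻¹ * ‖f (x + τ a • e a) - f (x + τ a • d)‖
          ≤ (τ a)⁻¹ * ((K : ℝ) * (τ a * ‖e a - d‖)) := by
            apply mul_le_mul_of_nonneg_left hdist (le_of_lt (inv_pos.2 ha))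
        _ = (K : ℝ) * ‖e a - d‖ := by field_simp
    have hlim : Tendsto (fun a => (K : ℝ) * ‖e a - d‖) l (𝓝 0) := by
      have h0 : Tendsto (fun a => ‖e a - d‖) l (𝓝 0) :=
        tendsto_iff_norm_sub_tendsto_zero.1 he
      simpa using h0.const_mul (K : ℝ)
    exact squeeze_zero_norm' hbd hlim
  have hsum := h1.add h2
  rw [add_zero] at hsum
  refine hsum.congr fun a => ?_
  rw [← smul_add]
  congr 1
  abel

lemma hasDirDeriv_norm_sq {H : Type*} [NormedAddCommGroup H] [InnerProductSpace ℝ H]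
    (lam : ℝ) (x d : H) :
    HasDirDeriv (fun t => lam * ‖t‖ ^ 2) x d (lam * (2 * (inner ℝ x d : ℝ))) := by
  have key : ∀ τ : ℝ, 0 < τ → τ⁻¹ • (lam * ‖x + τ • d‖ ^ 2 - lam * ‖x‖ ^ 2)
      = lam * (2 * (inner ℝ x d : ℝ)) + τ * (lam * ‖d‖ ^ 2) := by
    intro τ hτ
    rw [norm_add_sq_real, real_inner_smul_right, norm_smul, Real.norm_eq_abs,
      abs_of_pos hτ, smul_eq_mul, mul_pow]
    field_simp
    ring
  have hcont : Tendsto (fun τ : ℝ => lam * (2 * (inner ℝ x d : ℝ)) + τ * (lam * ‖d‖ ^ 2))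
      (𝓝[>] 0) (𝓝 (lam * (2 * (inner ℝ x d : ℝ)))) := by
    have h0 : Tendsto (fun τ : ℝ => lam * (2 * (inner ℝ x d : ℝ)) + τ * (lam * ‖d‖ ^ 2))
        (𝓝 0) (𝓝 (lam * (2 * (inner ℝ x d : ℝ)) + 0 * (lam * ‖d‖ ^ 2))) :=
      tendsto_const_nhds.add (tendsto_id.mul tendsto_const_nhds)
    simpa using h0.mono_left nhdsWithin_le_nhds
  refine hcont.congr' ?_
  filter_upwards [self_mem_nhdsWithin] with τ hτ
  exact (key τ hτ).symm

lemma hasDirDeriv_congr_dir {f : E → F} {x a b : E}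
    (h : ∀ τ : ℝ, 0 < τ → f (x + τ • a) = f (x + τ • b)) {y : F} :
    HasDirDeriv f x a y ↔ HasDirDeriv f x b y := by
  unfold HasDirDeriv
  refine tendsto_congr' ?_
  filter_upwards [self_mem_nhdsWithin] with τ hτ
  rw [h τ hτ]

lemma dirD_congr_dir {f : E → F} {x a b : E}
    (h : ∀ τ : ℝ, 0 < τ → f (x + τ • a) = f (x + τ • b)) :
    dirD f x a = dirD f x b := by
  by_cases hex : ∃ y, HasDirDeriv f x a y
  · obtain ⟨y, hy⟩ := hex
    rw [dirD_eq hy, dirD_eq ((hasDirDeriv_congr_dir h).1 hy)]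
  · rw [dirD, dif_neg hex, dirD, dif_neg]
    rintro ⟨y, hy⟩
    exact hex ⟨y, (hasDirDeriv_congr_dir h).2 hy⟩

lemma euc_tendsto_iff {ι : Type*} [Fintype ι] {f : α → EuclideanSpace ℝ ι} {l : Filter α}
    {x : EuclideanSpace ℝ ι} :
    Tendsto f l (𝓝 x) ↔ ∀ i, Tendsto (fun a => f a i) l (𝓝 (x i)) := by
  set e := PiLp.continuousLinearEquiv 2 ℝ (fun _ : ι => ℝ) with he
  constructor
  · intro h i
    have h2 := (e.continuous.tendsto x).comp h
    exact (tendsto_pi_nhds.1 h2) i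
  · intro h
    have h1 : Tendsto (fun a => e (f a)) l (𝓝 (e x)) := tendsto_pi_nhds.2 h
    have h2 := (e.symm.continuous.tendsto (e x)).comp h1
    have h3 : Tendsto (fun a => e.symm (e (f a))) l (𝓝 (e.symm (e x))) := h2
    simpa only [ContinuousLinearEquiv.symm_apply_apply] using h3

lemma euc_congr {ι : Type*} {x y : EuclideanSpace ℝ ι} (h : x = y) (i : ι) : x i = y i :=
  h ▸ rfl

end AuxGeneral
section MultiAux
variable {n L : ℕ} {N : Fin L → ℕ}

lemma feas_unique {ψ : (ℓ : Fin L) → ZSp n L N → EuclideanSpace ℝ (Fin (N ℓ))}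
    (hdep : DepBelow ψ) {z z' : ZSp n L N} (hz : z ∈ Feas ψ) (hz' : z' ∈ Feas ψ)
    (hth : thOf z = thOf z') : z = z' := by
  have blk : ∀ m : ℕ, ∀ j : Fin L, j.1 < m → uBlk z j = uBlk z' j := by
    intro m
    induction m with
    | zero => intro j hj; exact absurd hj (Nat.not_lt_zero _)
    | succ m ih =>
      intro j hj
      rcases Nat.lt_succ_iff_lt_or_eq.1 hj with h | h
      · exact ih j h
      · rw [hz j, hz' j]
        refine hdep j z z' hth fun j' hj' => ih j' ?_
        have := Fin.lt_def.1 hj'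
        omega
  ext idx
  cases idx with
  | inl i => exact euc_congr hth i
  | inr ji => exact euc_congr (blk L ji.1 ji.1.2) ji.2

lemma dirD_psi_congr {ψ : (ℓ : Fin L) → ZSp n L N → EuclideanSpace ℝ (Fin (N ℓ))}
    (hdep : DepBelow ψ) (ℓ : Fin L) (z a b : ZSp n L N)
    (hth : thOf a = thOf b) (hlow : ∀ j : Fin L, j < ℓ → uBlk a j = uBlk b j) :
    dirD (ψ ℓ) z a = dirD (ψ ℓ) z b := by
  apply dirD_congr_dir
  intro τ hτ
  apply hdep ℓ
  · ext i
    show z (Sum.inl i) + τ * a (Sum.inl i) = z (Sum.inl i) + τ * b (Sum.inl i)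
    rw [show a (Sum.inl i) = b (Sum.inl i) from euc_congr hth i]
  · intro j hj
    ext i
    show z (Sum.inr ⟨j, i⟩) + τ * a (Sum.inr ⟨j, i⟩) = z (Sum.inr ⟨j, i⟩) + τ * b (Sum.inr ⟨j, i⟩)
    rw [show a (Sum.inr ⟨j, i⟩) = b (Sum.inr ⟨j, i⟩) from euc_congr (hlow j hj) i]

/-- Recursive construction of the linearized direction. -/
def dchain (ψ : (ℓ : Fin L) → ZSp n L N → EuclideanSpace ℝ (Fin (N ℓ)))
    (z : ZSp n L N) (dθ : TSp n) : ℕ → ZSp n L N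
  | 0 => WithLp.toLp 2 (fun idx => Sum.elim (fun i => dθ i) (fun _ => 0) idx)
  | (m + 1) => WithLp.toLp 2 (fun idx =>
      Sum.elim (fun i => dchain ψ z dθ m (Sum.inl i))
        (fun ji : Σ ℓ : Fin L, Fin (N ℓ) =>
          if ji.1.1 = m then dirD (ψ ji.1) z (dchain ψ z dθ m) ji.2
          else dchain ψ z dθ m (Sum.inr ji)) idx)

lemma dchain_inl (ψ : (ℓ : Fin L) → ZSp n L N → EuclideanSpace ℝ (Fin (N ℓ)))
    (z : ZSp n L N) (dθ : TSp n) : ∀ m i, dchain ψ z dθ m (Sum.inl i) = dθ i := by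
  intro m
  induction m with
  | zero => intro i; rfl
  | succ m ih => intro i; exact ih i

lemma dchain_stab (ψ : (ℓ : Fin L) → ZSp n L N → EuclideanSpace ℝ (Fin (N ℓ)))
    (z : ZSp n L N) (dθ : TSp n) :
    ∀ m k (ji : Σ ℓ : Fin L, Fin (N ℓ)), ji.1.1 < m →
      dchain ψ z dθ (m + k) (Sum.inr ji) = dchain ψ z dθ m (Sum.inr ji) := by
  intro m k
  induction k with
  | zero => intro ji _; rfl
  | succ k ih =>
    intro ji hji
    show dchain ψ z dθ ((m + k) + 1) (Sum.inr ji) = dchain ψ z dθ m (Sum.inr ji)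
    show (if ji.1.1 = m + k then dirD (ψ ji.1) z (dchain ψ z dθ (m + k)) ji.2
      else dchain ψ z dθ (m + k) (Sum.inr ji)) = dchain ψ z dθ m (Sum.inr ji)
    rw [if_neg (by omega)]
    exact ih ji hji

lemma dchain_stab' (ψ : (ℓ : Fin L) → ZSp n L N → EuclideanSpace ℝ (Fin (N ℓ)))
    (z : ZSp n L N) (dθ : TSp n) {m m' : ℕ} (h : m ≤ m') (ji : Σ ℓ : Fin L, Fin (N ℓ))
    (hji : ji.1.1 < m) :
    dchain ψ z dθ m' (Sum.inr ji) = dchain ψ z dθ m (Sum.inr ji) := by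
  have hs := dchain_stab ψ z dθ m (m' - m) ji hji
  rw [show m + (m' - m) = m' by omega] at hs
  exact hs

lemma dchain_spec {ψ : (ℓ : Fin L) → ZSp n L N → EuclideanSpace ℝ (Fin (N ℓ))}
    (hdep : DepBelow ψ) (z : ZSp n L N) (dθ : TSp n) :
    thOf (dchain ψ z dθ L) = dθ ∧
      ∀ j : Fin L, uBlk (dchain ψ z dθ L) j = dirD (ψ j) z (dchain ψ z dθ L) := by
  constructor
  · ext i
    exact dchain_inl ψ z dθ L i
  · intro j
    have hstep : uBlk (dchain ψ z dθ L) j = dirD (ψ j) z (dchain ψ z dθ j.1) := by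
      ext i
      have h1 : dchain ψ z dθ L (Sum.inr ⟨j, i⟩) = dchain ψ z dθ (j.1 + 1) (Sum.inr ⟨j, i⟩) :=
        dchain_stab' ψ z dθ j.2 ⟨j, i⟩ (Nat.lt_succ_self _)
      have h2 : dchain ψ z dθ (j.1 + 1) (Sum.inr ⟨j, i⟩)
          = dirD (ψ j) z (dchain ψ z dθ j.1) i := by
        show (if j.1 = j.1 then dirD (ψ j) z (dchain ψ z dθ j.1) i
          else dchain ψ z dθ j.1 (Sum.inr ⟨j, i⟩)) = dirD (ψ j) z (dchain ψ z dθ j.1) i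
        rw [if_pos rfl]
      exact h1.trans h2
    rw [hstep]
    apply dirD_psi_congr hdep
    · ext i
      show dchain ψ z dθ j.1 (Sum.inl i) = dchain ψ z dθ L (Sum.inl i)
      rw [dchain_inl, dchain_inl]
    · intro j' hj'
      have hjj : j'.1 < j.1 := Fin.lt_def.1 hj'
      ext i
      show dchain ψ z dθ j.1 (Sum.inr ⟨j', i⟩) = dchain ψ z dθ L (Sum.inr ⟨j', i⟩)
      rw [dchain_stab' ψ z dθ hjj ⟨j', i⟩ (Nat.lt_succ_self _),
        dchain_stab' ψ z dθ j'.2 ⟨j', i⟩ (Nat.lt_succ_self _)]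

lemma chain_quot {α : Type*}
    {ψ : (ℓ : Fin L) → ZSp n L N → EuclideanSpace ℝ (Fin (N ℓ))}
    (hdep : DepBelow ψ) (hψLip : ∀ ℓ, LocallyLipschitz (ψ ℓ))
    (hψdd : ∀ ℓ, ∀ z d : ZSp n L N, ∃ y, HasDirDeriv (ψ ℓ) z d y)
    {z : ZSp n L N} (hz : z ∈ Feas ψ) {dθ : TSp n} {d : ZSp n L N}
    (hd1 : thOf d = dθ) (hd2 : ∀ ℓ, uBlk d ℓ = dirD (ψ ℓ) z d)
    {l : Filter α} {τ : α → ℝ} (hτ : Tendsto τ l (𝓝[>] 0))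
    {w : α → ZSp n L N} (hwF : ∀ a, w a ∈ Feas ψ)
    (hwth : ∀ a, thOf (w a) = thOf z + τ a • dθ) :
    Tendsto (fun a => (τ a)⁻¹ • (w a - z)) l (𝓝 d) := by
  have hτpos : ∀ᶠ a in l, 0 < τ a := hτ self_mem_nhdsWithin
  have hcoordθ : ∀ i, Tendsto (fun a => ((τ a)⁻¹ • (w a - z)) (Sum.inl i)) l
      (𝓝 (d (Sum.inl i))) := by
    intro i
    have hev : ∀ᶠ a in l, d (Sum.inl i) = ((τ a)⁻¹ • (w a - z)) (Sum.inl i) := by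
      filter_upwards [hτpos] with a ha
      have hw : w a (Sum.inl i) = z (Sum.inl i) + τ a * dθ i := euc_congr (hwth a) i
      show d (Sum.inl i) = (τ a)⁻¹ * (w a (Sum.inl i) - z (Sum.inl i))
      rw [hw, show d (Sum.inl i) = dθ i from euc_congr hd1 i]
      field_simp
      ring
    exact Tendsto.congr' hev tendsto_const_nhds
  have hblk : ∀ m : ℕ, ∀ j : Fin L, j.1 < m → ∀ i,
      Tendsto (fun a => ((τ a)⁻¹ • (w a - z)) (Sum.inr ⟨j, i⟩)) l
        (𝓝 (d (Sum.inr ⟨j, i⟩))) := by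
    intro m
    induction m with
    | zero => intro j hj; exact absurd hj (Nat.not_lt_zero _)
    | succ m ih =>
      intro j hj i
      rcases Nat.lt_succ_iff_lt_or_eq.1 hj with h | h
      · exact ih j h i
      set E : α → ZSp n L N := fun a => WithLp.toLp 2 (fun idx =>
        Sum.elim (fun i' => dθ i')
          (fun ji : Σ ℓ : Fin L, Fin (N ℓ) =>
            if ji.1.1 < m then ((τ a)⁻¹ • (w a - z)) (Sum.inr ji)
            else d (Sum.inr ji)) idx) with hEdef
      have hEtends : Tendsto E l (𝓝 d) := by
        rw [euc_tendsto_iff]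
        rintro (i' | ⟨j', i'⟩)
        · have : (fun a => E a (Sum.inl i')) = fun _ => dθ i' := rfl
          rw [this, show d (Sum.inl i') = dθ i' from euc_congr hd1 i']
          exact tendsto_const_nhds
        · by_cases hj' : j'.1 < m
          · have heq : (fun a => E a (Sum.inr ⟨j', i'⟩))
                = fun a => ((τ a)⁻¹ • (w a - z)) (Sum.inr ⟨j', i'⟩) := by
              funext a
              show (if j'.1 < m then ((τ a)⁻¹ • (w a - z)) (Sum.inr ⟨j', i'⟩)
                else d (Sum.inr ⟨j', i'⟩)) = _
              rw [if_pos hj']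
            rw [heq]
            exact ih j' hj' i'
          · have heq : (fun a => E a (Sum.inr ⟨j', i'⟩)) = fun _ => d (Sum.inr ⟨j', i'⟩) := by
              funext a
              show (if j'.1 < m then ((τ a)⁻¹ • (w a - z)) (Sum.inr ⟨j', i'⟩)
                else d (Sum.inr ⟨j', i'⟩)) = _
              rw [if_neg hj']
            rw [heq]
            exact tendsto_const_nhds
      obtain ⟨y, hy⟩ := hψdd j z d
      have hhad := hadamard (hψLip j) hy hτ hEtends
      have hcoord := (euc_tendsto_iff.1 hhad) i
      have hyd : d (Sum.inr ⟨j, i⟩) = y i := by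
        have hc := euc_congr (hd2 j) i
        rw [dirD_eq hy] at hc
        exact hc
      rw [hyd]
      refine hcoord.congr' ?_
      filter_upwards [hτpos] with a ha
      have hψeq : ψ j (z + τ a • E a) = ψ j (w a) := by
        apply hdep j
        · ext i''
          show z (Sum.inl i'') + τ a * E a (Sum.inl i'') = w a (Sum.inl i'')
          have hw : w a (Sum.inl i'') = z (Sum.inl i'') + τ a * dθ i'' :=
            euc_congr (hwth a) i''
          show z (Sum.inl i'') + τ a * dθ i'' = w a (Sum.inl i'')
          rw [hw]
        · intro j'' hj''
          have hj''m : j''.1 < m := by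
            have := Fin.lt_def.1 hj''
            omega
          ext i''
          show z (Sum.inr ⟨j'', i''⟩) + τ a * E a (Sum.inr ⟨j'', i''⟩)
            = w a (Sum.inr ⟨j'', i''⟩)
          have hEco : E a (Sum.inr ⟨j'', i''⟩)
              = (τ a)⁻¹ * (w a (Sum.inr ⟨j'', i''⟩) - z (Sum.inr ⟨j'', i''⟩)) := by
            show (if j''.1 < m then ((τ a)⁻¹ • (w a - z)) (Sum.inr ⟨j'', i''⟩)
              else d (Sum.inr ⟨j'', i''⟩)) = _
            rw [if_pos hj''m]
            rfl
          rw [hEco]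
          field_simp
          ring
      show ((τ a)⁻¹ • (ψ j (z + τ a • E a) - ψ j z)) i = ((τ a)⁻¹ • (w a - z)) (Sum.inr ⟨j, i⟩)
      rw [hψeq]
      show (τ a)⁻¹ * (ψ j (w a) i - ψ j z i)
        = (τ a)⁻¹ * (w a (Sum.inr ⟨j, i⟩) - z (Sum.inr ⟨j, i⟩))
      rw [show ψ j (w a) i = w a (Sum.inr ⟨j, i⟩) from (euc_congr (hwF a j) i).symm,
        show ψ j z i = z (Sum.inr ⟨j, i⟩) from (euc_congr (hz j) i).symm]
  rw [euc_tendsto_iff]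
  rintro (i | ⟨j, i⟩)
  · exact hcoordθ i
  · exact hblk L j j.2 i

lemma tangent_lin {ψ : (ℓ : Fin L) → ZSp n L N → EuclideanSpace ℝ (Fin (N ℓ))}
    (hψLip : ∀ ℓ, LocallyLipschitz (ψ ℓ))
    (hψdd : ∀ ℓ, ∀ z d : ZSp n L N, ∃ y, HasDirDeriv (ψ ℓ) z d y)
    {z : ZSp n L N} (hz : z ∈ Feas ψ) {d : ZSp n L N}
    (hd : d ∈ tangentCone (Feas ψ) z) : ∀ ℓ, uBlk d ℓ = dirD (ψ ℓ) z d := by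
  obtain ⟨zz, τ, hzF, hzz, hτpos, hτ0, hq⟩ := hd
  have hτ : Tendsto τ atTop (𝓝[>] (0 : ℝ)) :=
    tendsto_nhdsWithin_iff.2 ⟨hτ0, Eventually.of_forall hτpos⟩
  intro ℓ
  obtain ⟨y, hy⟩ := hψdd ℓ z d
  have h1 := hadamard (hψLip ℓ) hy hτ hq
  have h1' : Tendsto (fun k => (τ k)⁻¹ • (uBlk (zz k) ℓ - uBlk z ℓ)) atTop (𝓝 y) := by
    refine h1.congr fun k => ?_
    have harg : z + τ k • ((τ k)⁻¹ • (zz k - z)) = zz k := by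
      rw [smul_inv_smul₀ (hτpos k).ne']
      abel
    rw [harg, hzF k ℓ, hz ℓ]
  have h2 : Tendsto (fun k => (τ k)⁻¹ • (uBlk (zz k) ℓ - uBlk z ℓ)) atTop (𝓝 (uBlk d ℓ)) := by
    rw [euc_tendsto_iff]
    intro i
    exact (euc_tendsto_iff.1 hq) (Sum.inr ⟨ℓ, i⟩)
  rw [dirD_eq hy]
  exact tendsto_nhds_unique h2 h1'

lemma main_deriv (lam : ℝ)
    {g : USp L N → ℝ} (hgLip : LocallyLipschitz g)
    (hgdd : ∀ u du : USp L N, ∃ y, HasDirDeriv g u du y)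
    {ψ : (ℓ : Fin L) → ZSp n L N → EuclideanSpace ℝ (Fin (N ℓ))}
    (hdep : DepBelow ψ) (hψLip : ∀ ℓ, LocallyLipschitz (ψ ℓ))
    (hψdd : ∀ ℓ, ∀ z d : ZSp n L N, ∃ y, HasDirDeriv (ψ ℓ) z d y)
    {chain : TSp n → ZSp n L N} (hchainth : ∀ θ, thOf (chain θ) = θ)
    (hchainF : ∀ θ, chain θ ∈ Feas ψ)
    {Ψ : TSp n → ℝ} (hΨ : ∀ θ, Ψ θ = g (uOf (chain θ)))
    {z : ZSp n L N} (hz : z ∈ Feas ψ)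
    {d : ZSp n L N} (hd2 : ∀ ℓ, uBlk d ℓ = dirD (ψ ℓ) z d) :
    ∃ c : ℝ, HasDirDeriv (Fobj g lam) z d c ∧
      HasDirDeriv (fun t => Ψ t + lam * ‖t‖ ^ 2) (thOf z) (thOf d) c := by
  obtain ⟨yg, hyg⟩ := hgdd (uOf z) (uOf d)
  refine ⟨yg + lam * (2 * (inner ℝ (thOf z) (thOf d) : ℝ)), ?_, ?_⟩
  · have huarg : ∀ τ : ℝ, uOf (z + τ • d) = uOf z + τ • uOf d :=
      fun τ => PiLp.ext fun j => rfl
    have htharg : ∀ τ : ℝ, thOf (z + τ • d) = thOf z + τ • thOf d :=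
      fun τ => PiLp.ext fun i => rfl
    have hgterm : HasDirDeriv (fun z' : ZSp n L N => g (uOf z')) z d yg := by
      unfold HasDirDeriv
      simp only [huarg]
      exact hyg
    have hnterm : HasDirDeriv (fun z' : ZSp n L N => lam * ‖thOf z'‖ ^ 2) z d
        (lam * (2 * (inner ℝ (thOf z) (thOf d) : ℝ))) := by
      have hns := hasDirDeriv_norm_sq lam (thOf z) (thOf d)
      unfold HasDirDeriv at hns ⊢
      simp only [htharg]
      exact hns
    have hsum := hasDirDeriv_add hgterm hnterm
    exact hsum
  · have hchainz : chain (thOf z) = z :=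
      feas_unique hdep (hchainF (thOf z)) hz (hchainth (thOf z))
    have hQ : Tendsto (fun τ : ℝ => τ⁻¹ • (chain (thOf z + τ • thOf d) - z)) (𝓝[>] 0)
        (𝓝 d) := by
      refine chain_quot hdep hψLip hψdd hz rfl hd2 (l := 𝓝[>] (0 : ℝ)) (τ := fun t => t)
        tendsto_id (fun a => hchainF _) (fun a => hchainth _)
    have hqu : Tendsto (fun τ : ℝ => τ⁻¹ • (uOf (chain (thOf z + τ • thOf d)) - uOf z))
        (𝓝[>] 0) (𝓝 (uOf d)) := by
      rw [euc_tendsto_iff]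
      intro j
      exact (euc_tendsto_iff.1 hQ) (Sum.inr j)
    have hghad := hadamard hgLip hyg (l := 𝓝[>] (0 : ℝ)) (τ := fun t => t) tendsto_id hqu
    have hΨterm : HasDirDeriv Ψ (thOf z) (thOf d) yg := by
      unfold HasDirDeriv
      refine hghad.congr' ?_
      filter_upwards [self_mem_nhdsWithin] with τ hτ
      have hτ0 : (τ : ℝ) ≠ 0 := ne_of_gt hτ
      have harg : uOf z + τ • (τ⁻¹ • (uOf (chain (thOf z + τ • thOf d)) - uOf z))
          = uOf (chain (thOf z + τ • thOf d)) := by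
        rw [smul_inv_smul₀ hτ0]
        abel
      rw [harg, hΨ, hΨ, hchainz]
    exact hasDirDeriv_add hΨterm (hasDirDeriv_norm_sq lam (thOf z) (thOf d))

end MultiAux

/-- Lemma 3.2: equivalence of d-stationarity of (P) and (P0). -/
theorem stmt9
    {n L : ℕ} (hn : 0 < n) (hL : 0 < L) {N : Fin L → ℕ} (hN : ∀ ℓ, 0 < N ℓ)
    (lam : ℝ) (hlam : 0 < lam)
    (g : USp L N → ℝ) (hg0 : ∀ u, 0 ≤ g u)
    (ψ : (ℓ : Fin L) → ZSp n L N → EuclideanSpace ℝ (Fin (N ℓ)))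
    (hdep : DepBelow ψ)
    -- Assumption A1
    (hgLip : LocallyLipschitz g) (hψLip : ∀ ℓ, LocallyLipschitz (ψ ℓ))
    (hgdd : ∀ u du : USp L N, ∃ y, HasDirDeriv g u du y)
    (hψdd : ∀ ℓ, ∀ z d : ZSp n L N, ∃ y, HasDirDeriv (ψ ℓ) z d y)
    -- the recursively defined map `θ ↦ (θ, u₁(θ), …, u_L(θ))`
    (chain : TSp n → ZSp n L N)
    (hchainth : ∀ θ, thOf (chain θ) = θ)
    (hchainF : ∀ θ, chain θ ∈ Feas ψ)
    (Ψ : TSp n → ℝ) (hΨ : ∀ θ, Ψ θ = g (uOf (chain θ))) :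
    -- (i) a d-stationary point of (P) yields a d-stationary point of (P0)
    (∀ θ : TSp n, (∀ dθ, 0 ≤ dirD (fun t => Ψ t + lam * ‖t‖ ^ 2) θ dθ) →
      chain θ ∈ Feas ψ ∧
        ∀ d ∈ tangentCone (Feas ψ) (chain θ), 0 ≤ dirD (Fobj g lam) (chain θ) d) ∧
    -- (ii) conversely, a d-stationary point of (P0) yields a d-stationary point of (P)
    (∀ z : ZSp n L N, z ∈ Feas ψ →
      (∀ d ∈ tangentCone (Feas ψ) z, 0 ≤ dirD (Fobj g lam) z d) →
      ∀ dθ, 0 ≤ dirD (fun t => Ψ t + lam * ‖t‖ ^ 2) (thOf z) dθ) := by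
  constructor
  · -- (i)
    intro θ hstat
    refine ⟨hchainF θ, ?_⟩
    intro d hd
    have hz : chain θ ∈ Feas ψ := hchainF θ
    have hd2 : ∀ ℓ, uBlk d ℓ = dirD (ψ ℓ) (chain θ) d := tangent_lin hψLip hψdd hz hd
    obtain ⟨c, hF, hP⟩ := main_deriv lam hgLip hgdd hdep hψLip hψdd hchainth hchainF hΨ hz hd2
    rw [dirD_eq hF]
    have hs := hstat (thOf d)
    rw [show θ = thOf (chain θ) from (hchainth θ).symm, dirD_eq hP] at hs
    exact hs
  · -- (ii)
    intro z hz hstat dθ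
    have hchainz : chain (thOf z) = z :=
      feas_unique hdep (hchainF (thOf z)) hz (hchainth (thOf z))
    obtain ⟨hd1, hd2⟩ := dchain_spec hdep z dθ
    set d : ZSp n L N := dchain ψ z dθ L with hddef
    have hτfun : ∀ k : ℕ, (0 : ℝ) < ((k : ℝ) + 1)⁻¹ := fun k => by positivity
    have hτ0 : Tendsto (fun k : ℕ => ((k : ℝ) + 1)⁻¹) atTop (𝓝 0) := by
      simpa [one_div] using tendsto_one_div_add_atTop_nhds_zero_nat (𝕜 := ℝ)
    have hτ : Tendsto (fun k : ℕ => ((k : ℝ) + 1)⁻¹) atTop (𝓝[>] (0 : ℝ)) :=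
      tendsto_nhdsWithin_iff.2 ⟨hτ0, Eventually.of_forall hτfun⟩
    have hq : Tendsto
        (fun k : ℕ => (((k : ℝ) + 1)⁻¹)⁻¹ • (chain (thOf z + ((k : ℝ) + 1)⁻¹ • dθ) - z))
        atTop (𝓝 d) :=
      chain_quot hdep hψLip hψdd hz hd1 hd2 hτ (fun k => hchainF _) (fun k => hchainth _)
    have hzz : Tendsto (fun k : ℕ => chain (thOf z + ((k : ℝ) + 1)⁻¹ • dθ)) atTop (𝓝 z) := by
      have hprod : Tendsto
          (fun k : ℕ => z + ((k : ℝ) + 1)⁻¹ •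
            ((((k : ℝ) + 1)⁻¹)⁻¹ • (chain (thOf z + ((k : ℝ) + 1)⁻¹ • dθ) - z)))
          atTop (𝓝 (z + (0 : ℝ) • d)) :=
        tendsto_const_nhds.add (hτ0.smul hq)
      rw [zero_smul, add_zero] at hprod
      refine hprod.congr fun k => ?_
      rw [smul_inv_smul₀ (hτfun k).ne']
      abel
    have hdT : d ∈ tangentCone (Feas ψ) z :=
      ⟨fun k => chain (thOf z + ((k : ℝ) + 1)⁻¹ • dθ), fun k => ((k : ℝ) + 1)⁻¹,
        fun k => hchainF _, hzz, hτfun, hτ0, hq⟩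
    have hF0 := hstat d hdT
    obtain ⟨c, hF, hP⟩ := main_deriv lam hgLip hgdd hdep hψLip hψdd hchainth hchainF hΨ hz hd2
    rw [dirD_eq hF] at hF0
    rw [show dθ = thOf d from hd1.symm, dirD_eq hP]
    exact hF0
end
end
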